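/- arXiv:math/0501054 — 5 statements merged into one kernel-verified Lean document; each statement's English description precedes it below -/
import Mathlib

section
/- Suppose y ≤ w in S_d and i in [1,d] satisfies y(i) = w(i) and inv_i(y) = inv_i(w) (i.e., i is cancellable for the interval [y,w]). Then for any x with y ≤ x ≤ w in Bruhat order, x(i) = y(i) and inv_i(x) = inv_i(y). -/
open Equiv Finset

/-- `inv_i(w) = |{i' < i : w(i') > w(i)}|`. -/
def invi {d : ℕ} (w : Perm (Fin d)) (i : Fin d) : ℕ :=
  (Finset.univ.filter (fun i' => i' < i ∧ w i < w i')).card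

/-- `Inv_i(w) = |{i' > i : w(i') < w(i)}|`. -/
def Invi {d : ℕ} (w : Perm (Fin d)) (i : Fin d) : ℕ :=
  (Finset.univ.filter (fun i' => i < i' ∧ w i' < w i)).card

/-- `s` is one of the standard Coxeter generators (adjacent transpositions) of `S_d`. -/
def IsAdjTrans {d : ℕ} (s : Perm (Fin d)) : Prop :=
  ∃ (i : ℕ) (h : i + 1 < d), s = Equiv.swap ⟨i, Nat.lt_of_succ_lt h⟩ ⟨i + 1, h⟩

/-- Coxeter length: minimal length of an expression of `w` as a product of
adjacent transpositions. -/
noncomputable def len {d : ℕ} (w : Perm (Fin d)) : ℕ :=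
  sInf {n | ∃ l : List (Perm (Fin d)),
    l.length = n ∧ (∀ s ∈ l, IsAdjTrans s) ∧ l.prod = w}

/-- Bruhat order: `y ≤ w` iff some reduced word for `w` has a subword with product `y`. -/
def BruhatLE {d : ℕ} (y w : Perm (Fin d)) : Prop :=
  ∃ l : List (Perm (Fin d)), (∀ s ∈ l, IsAdjTrans s) ∧ l.length = len w ∧ l.prod = w ∧
    ∃ l' : List (Perm (Fin d)), List.Sublist l' l ∧ l'.prod = y

/-!
Bruhat order is controlled by the rank matrix `rank u a b = #{j < a | u j ≥ b}`: if `y ≤ w`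
then `rank y ≤ rank w` entrywise. Along a reduced word for `w` (its length is the inversion
number) each generator `s_t` is applied to a permutation in which the value `t` precedes `t + 1`;
such a left multiplication only raises the rank matrix, and does so compatibly with passing to
subwords.

For the cancellable index `i` with `c = y i = w i` we have `inv_i u = rank u i (c + 1)`, and the
rank matrices of `y` and `w` coincide at the four entries `(i or i + 1, c or c + 1)`. Squeezed
between them, `rank x` coincides there too, and its jumps from row `i` to row `i + 1` force
`x i = c`; then `inv_i x = rank x i (c + 1) = inv_i y`.
-/

namespace Bruhat

variable {d : ℕ}

def adjSwap {t : ℕ} (h : t + 1 < d) : Perm (Fin d) :=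
  swap ⟨t, by omega⟩ ⟨t + 1, h⟩

lemma isAdjTrans_adjSwap {t : ℕ} (h : t + 1 < d) : IsAdjTrans (adjSwap h) := ⟨t, h, rfl⟩

lemma adjSwap_apply_val {t : ℕ} (h : t + 1 < d) (v : Fin d) :
    (adjSwap h v : ℕ) = if (v : ℕ) = t then t + 1 else if (v : ℕ) = t + 1 then t else v := by
  simp only [adjSwap, swap_apply_def, Fin.ext_iff]
  split_ifs <;> simp_all

lemma inv_apply_ne {t : ℕ} (h : t + 1 < d) (u : Perm (Fin d)) :
    u⁻¹ ⟨t, by omega⟩ ≠ u⁻¹ ⟨t + 1, h⟩ := by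
  simp [Fin.ext_iff]

lemma adjSwap_mul_adjSwap_mul {t : ℕ} (h : t + 1 < d) (u : Perm (Fin d)) :
    adjSwap h * (adjSwap h * u) = u := by
  rw [← mul_assoc, adjSwap, swap_mul_self, one_mul]

lemma inv_apply_adjSwap_mul {t : ℕ} (h : t + 1 < d) (u : Perm (Fin d)) :
    (adjSwap h * u)⁻¹ ⟨t, by omega⟩ = u⁻¹ ⟨t + 1, h⟩ ∧
      (adjSwap h * u)⁻¹ ⟨t + 1, h⟩ = u⁻¹ ⟨t, by omega⟩ := by
  simp [adjSwap, mul_inv_rev, swap_inv]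

def invCount (u : Perm (Fin d)) : ℕ :=
  #{pq : Fin d × Fin d | pq.1 < pq.2 ∧ u pq.2 < u pq.1}

lemma invCount_one : invCount (1 : Perm (Fin d)) = 0 :=
  card_eq_zero.2 (filter_eq_empty_iff.2 fun _ _ h => lt_asymm h.1 h.2)

lemma invCount_adjSwap_mul_of_lt {t : ℕ} (h : t + 1 < d) {u : Perm (Fin d)}
    (hasc : u⁻¹ ⟨t, by omega⟩ < u⁻¹ ⟨t + 1, h⟩) :
    invCount (adjSwap h * u) = invCount u + 1 := by
  set P := u⁻¹ ⟨t, by omega⟩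
  set Q := u⁻¹ ⟨t + 1, h⟩
  have hinj : ∀ p q : Fin d, (u p : ℕ) = u q ↔ (p : ℕ) = q := fun p q => by
    rw [Fin.val_inj, u.apply_eq_iff_eq, Fin.val_inj]
  have hP : (u P : ℕ) = t := by simp [P]
  have hQ : (u Q : ℕ) = t + 1 := by simp [Q]
  calc invCount (adjSwap h * u)
      = ∑ pq : Fin d × Fin d,
          ((if pq.1 < pq.2 ∧ u pq.2 < u pq.1 then 1 else 0) + if pq = (P, Q) then 1 else 0) := by
        rw [invCount, card_filter]
        refine sum_congr rfl fun ⟨p, q⟩ _ => ?_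
        have := hinj p P; have := hinj p Q; have := hinj q P; have := hinj q Q
        rw [Fin.lt_def] at hasc
        simp only [Perm.mul_apply, adjSwap_apply_val, Fin.lt_def, Prod.ext_iff, Fin.ext_iff]
        split_ifs <;> omega
    _ = invCount u + 1 := by
        rw [sum_add_distrib, invCount, card_filter, sum_ite_eq', if_pos (mem_univ _)]

lemma invCount_adjSwap_mul_add_one_of_lt {t : ℕ} (h : t + 1 < d) {u : Perm (Fin d)}
    (hdesc : u⁻¹ ⟨t + 1, h⟩ < u⁻¹ ⟨t, by omega⟩) :
    invCount (adjSwap h * u) + 1 = invCount u := by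
  obtain ⟨h₁, h₂⟩ := inv_apply_adjSwap_mul h u
  have := invCount_adjSwap_mul_of_lt h (u := adjSwap h * u) (by rwa [h₁, h₂])
  rwa [adjSwap_mul_adjSwap_mul, eq_comm] at this

lemma invCount_adjSwap_mul_le {t : ℕ} (h : t + 1 < d) (u : Perm (Fin d)) :
    invCount (adjSwap h * u) ≤ invCount u + 1 := by
  rcases (inv_apply_ne h u).lt_or_gt with hasc | hdesc
  · exact (invCount_adjSwap_mul_of_lt h hasc).le
  · have := invCount_adjSwap_mul_add_one_of_lt h hdesc
    omega

lemma invCount_prod_le_length {l : List (Perm (Fin d))} (hl : ∀ s ∈ l, IsAdjTrans s) :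
    invCount l.prod ≤ l.length := by
  induction l with
  | nil => simp [invCount_one]
  | cons s l ih =>
    obtain ⟨t, h, rfl⟩ : ∃ t, ∃ h : t + 1 < d, s = adjSwap h := hl s List.mem_cons_self
    have := ih fun s hs => hl s (List.mem_cons_of_mem _ hs)
    have := invCount_adjSwap_mul_le h l.prod
    rw [List.prod_cons, List.length_cons]
    omega

lemma exists_inv_apply_lt_of_ne_one {u : Perm (Fin d)} (hu : u ≠ 1) :
    ∃ (t : ℕ) (h : t + 1 < d), u⁻¹ ⟨t + 1, h⟩ < u⁻¹ ⟨t, by omega⟩ := by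
  by_contra! hasc
  cases d with
  | zero => exact hu (Subsingleton.elim u 1)
  | succ n =>
    have hmono : StrictMono ⇑u⁻¹ := Fin.strictMono_iff_lt_succ.2 fun j =>
      (hasc j j.succ.isLt).lt_of_ne (inv_apply_ne j.succ.isLt u)
    exact hu (inv_eq_one.1 (DFunLike.coe_injective hmono.eq_id))

lemma exists_word_length_invCount (u : Perm (Fin d)) :
    ∃ l : List (Perm (Fin d)),
      (∀ s ∈ l, IsAdjTrans s) ∧ l.length = invCount u ∧ l.prod = u := by
  induction hn : invCount u using Nat.strong_induction_on generalizing u with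
  | _ n ih =>
    by_cases hu : u = 1
    · subst hu
      exact ⟨[], by simp, by simp [← hn, invCount_one], rfl⟩
    obtain ⟨t, h, hdesc⟩ := exists_inv_apply_lt_of_ne_one hu
    have hcount := invCount_adjSwap_mul_add_one_of_lt h hdesc
    obtain ⟨l, hl, hlen, hprod⟩ := ih _ (by omega) (adjSwap h * u) rfl
    refine ⟨adjSwap h :: l, ?_, by simp [hlen]; omega,
      by rw [List.prod_cons, hprod, adjSwap_mul_adjSwap_mul]⟩
    intro s hs
    rcases List.mem_cons.1 hs with rfl | hs
    exacts [isAdjTrans_adjSwap h, hl s hs]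

lemma len_eq_invCount (u : Perm (Fin d)) : len u = invCount u := by
  obtain ⟨l₀, hl₀, hlen₀, hprod₀⟩ := exists_word_length_invCount u
  refine le_antisymm (Nat.sInf_le ⟨l₀, hlen₀, hl₀, hprod₀⟩) ?_
  obtain ⟨l, hlen, hl, hprod⟩ : len u ∈ {n | ∃ l : List (Perm (Fin d)),
      l.length = n ∧ (∀ s ∈ l, IsAdjTrans s) ∧ l.prod = u} :=
    Nat.sInf_mem ⟨_, l₀, hlen₀, hl₀, hprod₀⟩
  rw [← hlen, ← hprod]
  exact invCount_prod_le_length hl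

def rank (u : Perm (Fin d)) (a b : ℕ) : ℕ :=
  #{i : Fin d | (i : ℕ) < a ∧ b ≤ u i}

lemma rank_eq_rank_succ_add (u : Perm (Fin d)) (a : ℕ) {b : ℕ} (hb : b < d) :
    rank u a b = rank u a (b + 1) + if (u⁻¹ ⟨b, hb⟩ : ℕ) < a then 1 else 0 := by
  calc rank u a b
      = ∑ i : Fin d, ((if (i : ℕ) < a ∧ b + 1 ≤ u i then 1 else 0) +
          if i = u⁻¹ ⟨b, hb⟩ then (if (i : ℕ) < a then 1 else 0) else 0) := by
        rw [rank, card_filter]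
        refine sum_congr rfl fun i _ => ?_
        have : (u i : ℕ) = b ↔ i = u⁻¹ ⟨b, hb⟩ := by
          rw [Perm.eq_inv_iff_eq, Fin.ext_iff]
        split_ifs <;> omega
    _ = _ := by rw [sum_add_distrib, rank, card_filter, sum_ite_eq', if_pos (mem_univ _)]

lemma rank_succ_left (u : Perm (Fin d)) (i : Fin d) (b : ℕ) :
    rank u (i + 1) b = rank u i b + if b ≤ u i then 1 else 0 := by
  calc rank u (i + 1) b
      = ∑ j : Fin d, ((if (j : ℕ) < i ∧ b ≤ u j then 1 else 0) +
          if j = i then (if b ≤ u j then 1 else 0) else 0) := by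
        rw [rank, card_filter]
        refine sum_congr rfl fun j _ => ?_
        simp only [Fin.ext_iff]
        split_ifs <;> omega
    _ = _ := by rw [sum_add_distrib, rank, card_filter, sum_ite_eq', if_pos (mem_univ _)]

lemma rank_adjSwap_mul_of_ne {t : ℕ} (h : t + 1 < d) (u : Perm (Fin d)) (a : ℕ) {b : ℕ}
    (hb : b ≠ t + 1) : rank (adjSwap h * u) a b = rank u a b := by
  simp only [rank, Perm.mul_apply, adjSwap_apply_val]
  congr 1
  ext i
  simp only [mem_filter, mem_univ, true_and]
  split_ifs <;> omega

lemma rank_adjSwap_mul_succ {t : ℕ} (h : t + 1 < d) (u : Perm (Fin d)) (a : ℕ) :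
    rank (adjSwap h * u) a (t + 1) =
      rank u a (t + 2) + if (u⁻¹ ⟨t, by omega⟩ : ℕ) < a then 1 else 0 := by
  rw [rank_eq_rank_succ_add _ a h, (inv_apply_adjSwap_mul h u).2,
    rank_adjSwap_mul_of_ne h u a (by omega)]

lemma rank_eq_rank_add_two_add (u : Perm (Fin d)) (a : ℕ) {t : ℕ} (h : t + 1 < d) :
    rank u a t = rank u a (t + 2) + (if (u⁻¹ ⟨t, by omega⟩ : ℕ) < a then 1 else 0) +
      if (u⁻¹ ⟨t + 1, h⟩ : ℕ) < a then 1 else 0 := by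
  have := rank_eq_rank_succ_add u a (by omega : t < d)
  have : rank u a (t + 1) = rank u a (t + 2) + _ := rank_eq_rank_succ_add u a h
  omega

lemma rank_le_rank_adjSwap_mul {t : ℕ} (h : t + 1 < d) {u : Perm (Fin d)}
    (hasc : u⁻¹ ⟨t, by omega⟩ < u⁻¹ ⟨t + 1, h⟩) :
    rank u ≤ rank (adjSwap h * u) := by
  intro a b
  beta_reduce
  obtain rfl | hb := eq_or_ne b (t + 1)
  · have : rank u a (t + 1) = rank u a (t + 2) + _ := rank_eq_rank_succ_add u a h
    rw [rank_adjSwap_mul_succ]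
    rw [Fin.lt_def] at hasc
    split_ifs at * <;> omega
  · exact (rank_adjSwap_mul_of_ne h u a hb).ge

lemma rank_adjSwap_mul_mono {t : ℕ} (h : t + 1 < d) {u v : Perm (Fin d)}
    (huv : rank u ≤ rank v) (hasc : v⁻¹ ⟨t, by omega⟩ < v⁻¹ ⟨t + 1, h⟩) :
    rank (adjSwap h * u) ≤ rank (adjSwap h * v) := by
  intro a b
  beta_reduce
  obtain rfl | hb := eq_or_ne b (t + 1)
  · have : rank u a (t + 2) ≤ rank v a (t + 2) := huv a (t + 2)
    have : rank u a t ≤ rank v a t := huv a t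
    have := rank_eq_rank_add_two_add u a h
    have := rank_eq_rank_add_two_add v a h
    rw [rank_adjSwap_mul_succ, rank_adjSwap_mul_succ]
    rw [Fin.lt_def] at hasc
    split_ifs at * <;> omega
  · rw [rank_adjSwap_mul_of_ne h u a hb, rank_adjSwap_mul_of_ne h v a hb]
    exact huv a b

lemma inv_apply_lt_of_invCount_lt {t : ℕ} (h : t + 1 < d) {u : Perm (Fin d)}
    (hlt : invCount u < invCount (adjSwap h * u)) :
    u⁻¹ ⟨t, by omega⟩ < u⁻¹ ⟨t + 1, h⟩ := by
  refine (inv_apply_ne h u).lt_or_gt.resolve_right fun hdesc => ?_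
  have := invCount_adjSwap_mul_add_one_of_lt h hdesc
  omega

lemma exists_ascent_of_reduced_cons {s : Perm (Fin d)} {l : List (Perm (Fin d))}
    (hl : ∀ s' ∈ s :: l, IsAdjTrans s') (hred : invCount (s :: l).prod = (s :: l).length) :
    ∃ (t : ℕ) (h : t + 1 < d), s = adjSwap h ∧ (∀ s' ∈ l, IsAdjTrans s') ∧
      invCount l.prod = l.length ∧
      l.prod⁻¹ ⟨t, by omega⟩ < l.prod⁻¹ ⟨t + 1, h⟩ := by
  obtain ⟨t, h, rfl⟩ : ∃ t, ∃ h : t + 1 < d, s = adjSwap h := hl s List.mem_cons_self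
  have hl' : ∀ s' ∈ l, IsAdjTrans s' := fun s' hs' => hl s' (List.mem_cons_of_mem _ hs')
  have hle := invCount_prod_le_length hl'
  rw [List.prod_cons, List.length_cons] at hred
  have hasc := inv_apply_lt_of_invCount_lt h (u := l.prod) (by omega)
  have := invCount_adjSwap_mul_of_lt h hasc
  exact ⟨t, h, rfl, hl', by omega, hasc⟩

lemma rank_prod_mono_of_sublist {l' l : List (Perm (Fin d))} (hsub : l'.Sublist l)
    (hl : ∀ s ∈ l, IsAdjTrans s) (hred : invCount l.prod = l.length) :
    rank l'.prod ≤ rank l.prod := by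
  induction hsub with
  | slnil => exact le_rfl
  | cons s _ ih =>
    obtain ⟨t, h, rfl, hl', hred', hasc⟩ := exists_ascent_of_reduced_cons hl hred
    rw [List.prod_cons]
    exact (ih hl' hred').trans (rank_le_rank_adjSwap_mul h hasc)
  | cons_cons s _ ih =>
    obtain ⟨t, h, rfl, hl', hred', hasc⟩ := exists_ascent_of_reduced_cons hl hred
    rw [List.prod_cons, List.prod_cons]
    exact rank_adjSwap_mul_mono h (ih hl' hred') hasc

lemma rank_mono_of_bruhatLE {y w : Perm (Fin d)} (hyw : BruhatLE y w) : rank y ≤ rank w := by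
  obtain ⟨l, hl, hlen, rfl, l', hsub, rfl⟩ := hyw
  exact rank_prod_mono_of_sublist hsub hl (by rw [← len_eq_invCount, hlen])

lemma invi_eq_rank (u : Perm (Fin d)) (i : Fin d) : invi u i = rank u i (u i + 1) := rfl

lemma rank_near_apply (u : Perm (Fin d)) (i : Fin d) :
    rank u i (u i) = rank u i (u i + 1) ∧
      rank u (i + 1) (u i) = rank u i (u i + 1) + 1 ∧
      rank u (i + 1) (u i + 1) = rank u i (u i + 1) := by
  refine ⟨?_, ?_, ?_⟩
  · simp [rank_eq_rank_succ_add u i (u i).isLt]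
  · simp [rank_succ_left, rank_eq_rank_succ_add u i (u i).isLt]
  · simp [rank_succ_left]

lemma apply_eq_of_rank_le_of_le {y x w : Perm (Fin d)} (hyx : rank y ≤ rank x)
    (hxw : rank x ≤ rank w) {i : Fin d} (hval : y i = w i)
    (hrank : rank y i (y i + 1) = rank w i (y i + 1)) :
    x i = y i ∧ rank x i (y i + 1) = rank y i (y i + 1) := by
  have squeeze : ∀ a b, rank y a b = rank w a b → rank x a b = rank y a b :=
    fun a b h => le_antisymm (h ▸ hxw a b) (hyx a b)
  obtain ⟨hy₀, hy₁, hy₂⟩ := rank_near_apply y i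
  obtain ⟨hw₀, hw₁, hw₂⟩ := rank_near_apply w i
  rw [← hval] at hw₀ hw₁ hw₂
  have e₀ := squeeze i (y i) (by rw [hy₀, hw₀, hrank])
  have e₁ := squeeze (i + 1) (y i) (by rw [hy₁, hw₁, hrank])
  have e₂ := squeeze (i + 1) (y i + 1) (by rw [hy₂, hw₂, hrank])
  have e₃ := squeeze i (y i + 1) hrank
  have s₁ := rank_succ_left x i (y i)
  have s₂ := rank_succ_left x i (y i + 1)
  refine ⟨Fin.ext ?_, e₃⟩
  split_ifs at s₁ s₂ <;> omega

end Bruhat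

open Bruhat in
theorem stmt5_general (d : ℕ) (y w : Perm (Fin d)) (i : Fin d)
    (hval : y i = w i) (hinv : invi y i = invi w i)
    (x : Perm (Fin d)) (hyx : BruhatLE y x) (hxw : BruhatLE x w) :
    x i = y i ∧ invi x i = invi y i := by
  rw [invi_eq_rank, invi_eq_rank, ← hval] at hinv
  obtain ⟨hx, hrank⟩ :=
    apply_eq_of_rank_le_of_le (rank_mono_of_bruhatLE hyx) (rank_mono_of_bruhatLE hxw) hval hinv
  exact ⟨hx, by rw [invi_eq_rank, invi_eq_rank, hx, hrank]⟩

/-- if `i` is cancellable for `[y,w]`, then every `x` in the Bruhat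
interval `[y,w]` satisfies `x(i) = y(i)` and `inv_i(x) = inv_i(y)`. -/
theorem stmt5 (d : ℕ) (y w : Perm (Fin d)) (i : Fin d)
    (hyw : BruhatLE y w) (hval : y i = w i) (hinv : invi y i = invi w i)
    (x : Perm (Fin d)) (hyx : BruhatLE y x) (hxw : BruhatLE x w) :
    x i = y i ∧ invi x i = invi y i :=
  stmt5_general d y w i hval hinv x hyx hxw
end

section
/- Suppose y ≤ w in S_d and i is cancellable for [y,w] (i.e., y(i) = w(i) and inv_i(y) = inv_i(w)). Then the map x ↦ x^{î} (deleting position i and value y(i), and renumbering order-preservingly) is an isomorphism of posets from the Bruhat interval [y,w] in S_d onto the Bruhat interval [y^{î}, w^{î}] in S_{d-1}, and it reduces all lengths by the same amount. -/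
open Equiv Finset

/-- `x'` is the permutation `x^{î}` of `S_{d-1}` obtained from `x` by deleting position `i`
and value `x i`, renumbering order-preservingly: `x ∘ σ_i = σ_{x i} ∘ x'`. -/
def IsHat {d : ℕ} (i : Fin (d + 1)) (x : Perm (Fin (d + 1))) (x' : Perm (Fin d)) : Prop :=
  ∀ j : Fin d, x (i.succAbove j) = (x i).succAbove (x' j)

/-!
Ehresmann's criterion: `y ≤ w` in Bruhat order iff `r_w(a, b) ≤ r_y(a, b)` for all `a, b`, where
`r_x(a, b) = #{p < a | x p < b}`. It follows from the subword definition by the lifting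
property of adjacent transpositions, the length being the number of inversions.

If `i` is cancellable for `[y, w]`, then `r_y` and `r_w` agree at the four corners
`(i, c), (i, c + 1), (i + 1, c), (i + 1, c + 1)` with `c = y i`, hence so does `r_x` for every
`x ∈ [y, w]`; this forces `x i = c` and `inv_i(x) = inv_i(y)`. Deleting position `i` and value `c`
changes every rank function by the same amount at corresponding points, so `x ≤ z` iff
`x^î ≤ z^î`, and `ℓ(x) - ℓ(x^î) = inv_i(x) + Inv_i(x)` is constant on `[y, w]`.
-/

namespace Fin

theorem card_filter_univ_succAbove {n : ℕ} (p : Fin (n + 1)) (P : Fin (n + 1) → Prop)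
    [DecidablePred P] :
    #{q | P q} = #{j | P (p.succAbove j)} + if P p then 1 else 0 := by
  simp only [card_filter, sum_univ_succAbove _ p, add_comm]

theorem val_succAbove {n : ℕ} (p : Fin (n + 1)) (j : Fin n) :
    (p.succAbove j : ℕ) = if (j : ℕ) < p then (j : ℕ) else (j : ℕ) + 1 := by
  simp only [succAbove, lt_def, val_castSucc]
  split_ifs <;> simp

theorem exists_succAbove_val_lt_iff {n : ℕ} (p : Fin (n + 1)) (a : ℕ) :
    ∃ A, ∀ j : Fin n, (p.succAbove j : ℕ) < A ↔ (j : ℕ) < a :=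
  ⟨if a < p then a else a + 1, fun j => by rw [val_succAbove]; split_ifs <;> omega⟩

theorem exists_val_lt_iff_succAbove_val_lt {n : ℕ} (p : Fin (n + 1)) (A : ℕ) :
    ∃ a, ∀ j : Fin n, (p.succAbove j : ℕ) < A ↔ (j : ℕ) < a :=
  ⟨if A ≤ p then A else A - 1, fun j => by rw [val_succAbove]; split_ifs <;> omega⟩

end Fin

section Rank

variable {n : ℕ}

def rankCount (x : Perm (Fin n)) (a b : ℕ) : ℕ :=
  #{p : Fin n | (p : ℕ) < a ∧ (x p : ℕ) < b}

def RankLE (y w : Perm (Fin n)) : Prop :=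
  ∀ a b, rankCount w a b ≤ rankCount y a b

theorem RankLE.refl (x : Perm (Fin n)) : RankLE x x := fun _ _ => le_rfl

theorem rankCount_succ (x : Perm (Fin n)) {a : ℕ} (ha : a < n) (b : ℕ) :
    rankCount x (a + 1) b = rankCount x a b + if (x ⟨a, ha⟩ : ℕ) < b then 1 else 0 := by
  have split : ∀ p : Fin n, (if (p : ℕ) < a + 1 ∧ (x p : ℕ) < b then 1 else 0) =
      (if (p : ℕ) < a ∧ (x p : ℕ) < b then 1 else 0) +
        if p = ⟨a, ha⟩ then (if (x ⟨a, ha⟩ : ℕ) < b then 1 else 0) else 0 := fun p => by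
    by_cases hp : p = ⟨a, ha⟩
    · subst hp; simp
    · have : (p : ℕ) ≠ a := fun h => hp (Fin.ext h)
      split_ifs <;> omega
  simp only [rankCount, card_filter, sum_congr rfl fun p _ => split p, sum_add_distrib,
    sum_ite_eq', mem_univ, if_true]

theorem one_rankLE (x : Perm (Fin n)) : RankLE 1 x := by
  intro a b
  have h₁ : rankCount (1 : Perm (Fin n)) a b = min n (min a b) := by
    rw [← Fin.card_filter_val_lt, rankCount]
    simp only [Perm.one_apply, lt_min_iff]
    congr 1
  have h₂ : rankCount x a b ≤ a :=
    calc rankCount x a b ≤ #{p : Fin n | (p : ℕ) < a} := card_le_card fun p => by simp_all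
      _ ≤ a := by rw [Fin.card_filter_val_lt]; omega
  have h₃ : rankCount x a b ≤ b :=
    calc rankCount x a b ≤ #{p : Fin n | (x p : ℕ) < b} := card_le_card fun p => by simp_all
      _ = #{v : Fin n | (v : ℕ) < b} := card_equiv x fun p => by simp
      _ ≤ b := by rw [Fin.card_filter_val_lt]; omega
  have h₄ : rankCount x a b ≤ n := (card_le_univ _).trans (by simp)
  omega

theorem eq_of_rankCount_eq {x z : Perm (Fin n)} (h : ∀ a b, rankCount x a b = rankCount z a b) :
    x = z := by
  ext p
  have key : ∀ b, (x p : ℕ) < b ↔ (z p : ℕ) < b := fun b => by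
    have hx := rankCount_succ x p.isLt b
    have hz := rankCount_succ z p.isLt b
    rw [h, h] at hx
    constructor <;> intro <;> split_ifs at hx hz <;> omega
  have := key (x p + 1)
  have := key (z p + 1)
  omega

theorem eq_one_of_rankLE_one {y : Perm (Fin n)} (h : RankLE y 1) : y = 1 :=
  eq_of_rankCount_eq fun a b => le_antisymm (one_rankLE y a b) (h a b)

end Rank

section AdjSwap

def adjSwap {n : ℕ} (k : ℕ) (hk : k + 1 < n) : Perm (Fin n) :=
  swap ⟨k, Nat.lt_of_succ_lt hk⟩ ⟨k + 1, hk⟩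

theorem isAdjTrans_iff {n : ℕ} {s : Perm (Fin n)} : IsAdjTrans s ↔ ∃ k hk, s = adjSwap k hk :=
  Iff.rfl

variable {n k : ℕ} (hk : k + 1 < n)

theorem adjSwap_apply_val (p : Fin n) :
    (adjSwap k hk p : ℕ) = if (p : ℕ) = k then k + 1 else if (p : ℕ) = k + 1 then k else p := by
  rw [adjSwap, swap_apply_def]
  split_ifs <;> simp_all [Fin.ext_iff]

theorem adjSwap_mul_self : adjSwap k hk * adjSwap k hk = 1 := swap_mul_self _ _

theorem mul_adjSwap_apply_left (x : Perm (Fin n)) :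
    (x * adjSwap k hk) ⟨k, Nat.lt_of_succ_lt hk⟩ = x ⟨k + 1, hk⟩ := by
  simp [adjSwap]

theorem mul_adjSwap_apply_right (x : Perm (Fin n)) :
    (x * adjSwap k hk) ⟨k + 1, hk⟩ = x ⟨k, Nat.lt_of_succ_lt hk⟩ := by
  simp [adjSwap]

variable {hk}

theorem rankCount_mul_adjSwap_of_ne (x : Perm (Fin n)) {a : ℕ} (ha : a ≠ k + 1) (b : ℕ) :
    rankCount (x * adjSwap k hk) a b = rankCount x a b := by
  refine card_equiv (adjSwap k hk) fun p => ?_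
  have hp : (p : ℕ) < a ↔ (adjSwap k hk p : ℕ) < a := by
    rw [adjSwap_apply_val]
    split_ifs <;> omega
  rw [mem_filter, mem_filter, Perm.mul_apply, hp]
  simp

theorem rankCount_mul_adjSwap_self (x : Perm (Fin n)) (b : ℕ) :
    rankCount (x * adjSwap k hk) (k + 1) b =
      rankCount x k b + if (x ⟨k + 1, hk⟩ : ℕ) < b then 1 else 0 := by
  rw [rankCount_succ _ (Nat.lt_of_succ_lt hk), mul_adjSwap_apply_left,
    rankCount_mul_adjSwap_of_ne _ (by omega)]

theorem RankLE.mul_adjSwap_right {u v : Perm (Fin n)} (h : RankLE u v)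
    (hasc : v ⟨k, Nat.lt_of_succ_lt hk⟩ < v ⟨k + 1, hk⟩ ∨
      u ⟨k, Nat.lt_of_succ_lt hk⟩ < u ⟨k + 1, hk⟩) :
    RankLE u (v * adjSwap k hk) := by
  intro a b
  rcases eq_or_ne a (k + 1) with rfl | ha
  · rw [rankCount_mul_adjSwap_self]
    have := h k b
    have := h (k + 1) b
    have := h (k + 1 + 1) b
    have := rankCount_succ u (Nat.lt_of_succ_lt hk) b
    have := rankCount_succ u hk b
    have := rankCount_succ v (Nat.lt_of_succ_lt hk) b
    have := rankCount_succ v hk b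
    simp only [Fin.lt_def] at hasc
    split_ifs at * <;> omega
  · rw [rankCount_mul_adjSwap_of_ne _ ha]
    exact h a b

theorem RankLE.mul_adjSwap {u v : Perm (Fin n)} (h : RankLE u v)
    (hasc : v ⟨k, Nat.lt_of_succ_lt hk⟩ < v ⟨k + 1, hk⟩ ∨
      u ⟨k + 1, hk⟩ < u ⟨k, Nat.lt_of_succ_lt hk⟩) :
    RankLE (u * adjSwap k hk) (v * adjSwap k hk) := by
  intro a b
  rcases eq_or_ne a (k + 1) with rfl | ha
  · rw [rankCount_mul_adjSwap_self, rankCount_mul_adjSwap_self]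
    have := h k b
    have := h (k + 1) b
    have := h (k + 1 + 1) b
    have := rankCount_succ u (Nat.lt_of_succ_lt hk) b
    have := rankCount_succ u hk b
    have := rankCount_succ v (Nat.lt_of_succ_lt hk) b
    have := rankCount_succ v hk b
    simp only [Fin.lt_def] at hasc
    split_ifs at * <;> omega
  · rw [rankCount_mul_adjSwap_of_ne _ ha, rankCount_mul_adjSwap_of_ne _ ha]
    exact h a b

end AdjSwap

section Length

variable {n k : ℕ} {hk : k + 1 < n}

def inversions (x : Perm (Fin n)) : Finset (Fin n × Fin n) :=
  {pq | pq.1 < pq.2 ∧ x pq.2 < x pq.1}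

def invCount (x : Perm (Fin n)) : ℕ := #(inversions x)

theorem mem_inversions {x : Perm (Fin n)} {pq : Fin n × Fin n} :
    pq ∈ inversions x ↔ pq.1 < pq.2 ∧ x pq.2 < x pq.1 := by
  simp [inversions]

theorem invCount_one : invCount (1 : Perm (Fin n)) = 0 :=
  card_eq_zero.2 <| eq_empty_of_forall_notMem fun _ h =>
    lt_asymm (mem_inversions.1 h).1 (mem_inversions.1 h).2

theorem lt_or_gt_apply_adj (x : Perm (Fin n)) (hk : k + 1 < n) :
    x ⟨k, Nat.lt_of_succ_lt hk⟩ < x ⟨k + 1, hk⟩ ∨ x ⟨k + 1, hk⟩ < x ⟨k, Nat.lt_of_succ_lt hk⟩ :=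
  lt_or_gt_of_ne (x.injective.ne (by simp))

theorem invCount_mul_adjSwap {x : Perm (Fin n)}
    (hasc : x ⟨k, Nat.lt_of_succ_lt hk⟩ < x ⟨k + 1, hk⟩) :
    invCount (x * adjSwap k hk) = invCount x + 1 := by
  have hmem : ∀ pq, pq ∈ (inversions (x * adjSwap k hk)).erase (⟨k, by omega⟩, ⟨k + 1, hk⟩) ↔
      prodCongr (adjSwap k hk) (adjSwap k hk) pq ∈ inversions x := by
    rintro ⟨p, q⟩
    rw [mem_erase, mem_inversions, mem_inversions]
    by_cases hpq : p = ⟨k + 1, hk⟩ ∧ q = ⟨k, Nat.lt_of_succ_lt hk⟩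
    · obtain ⟨rfl, rfl⟩ := hpq
      simp [adjSwap, hasc.not_gt]
    · have hp := adjSwap_apply_val hk p
      have hq := adjSwap_apply_val hk q
      have : ((p, q) ≠ (⟨k, Nat.lt_of_succ_lt hk⟩, ⟨k + 1, hk⟩) ∧ p < q) ↔
          adjSwap k hk p < adjSwap k hk q := by
        simp only [ne_eq, Prod.mk.injEq, Fin.ext_iff, Fin.lt_def] at hpq ⊢
        split_ifs at hp hq <;> omega
      simp only [Perm.mul_apply, ← and_assoc, this, prodCongr_apply, Prod.map]
  have hmem₀ : (⟨k, Nat.lt_of_succ_lt hk⟩, ⟨k + 1, hk⟩) ∈ inversions (x * adjSwap k hk) := by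
    simpa [mem_inversions, adjSwap] using hasc
  rw [invCount, invCount, ← card_equiv _ hmem, card_erase_add_one hmem₀]

theorem invCount_mul_adjSwap_of_gt {x : Perm (Fin n)}
    (hdesc : x ⟨k + 1, hk⟩ < x ⟨k, Nat.lt_of_succ_lt hk⟩) :
    invCount (x * adjSwap k hk) + 1 = invCount x := by
  have h := invCount_mul_adjSwap (x := x * adjSwap k hk) (hk := hk)
    (by rwa [mul_adjSwap_apply_left, mul_adjSwap_apply_right])
  rwa [mul_assoc, adjSwap_mul_self, mul_one, eq_comm] at h

theorem exists_descent_of_ne_one {x : Perm (Fin n)} (hx : x ≠ 1) :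
    ∃ k hk, x ⟨k + 1, hk⟩ < x ⟨k, Nat.lt_of_succ_lt hk⟩ := by
  by_contra! h
  rcases n with _ | m
  · exact hx (Subsingleton.elim _ _)
  have hmono : StrictMono x := Fin.strictMono_iff_lt_succ.2 fun j =>
    (h j (by omega)).lt_of_ne (x.injective.ne (by simp [Fin.ext_iff]))
  exact hx (Equiv.ext (congrFun hmono.eq_id))

theorem exists_adjSwap_word (x : Perm (Fin n)) :
    ∃ l : List (Perm (Fin n)), (∀ s ∈ l, IsAdjTrans s) ∧ l.length = invCount x ∧ l.prod = x := by
  induction hN : invCount x using Nat.strong_induction_on generalizing x with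
  | _ N ih =>
  by_cases hx : x = 1
  · subst hx
    exact ⟨[], by simp, by simp [← hN, invCount_one], rfl⟩
  obtain ⟨k, hk, hdesc⟩ := exists_descent_of_ne_one hx
  have hstep := invCount_mul_adjSwap_of_gt hdesc
  obtain ⟨l, hl, hlen, hprod⟩ := ih _ (by omega) (x * adjSwap k hk) rfl
  refine ⟨l ++ [adjSwap k hk], ?_, by simp; omega, by simp [hprod, mul_assoc, adjSwap_mul_self]⟩
  simpa [or_imp, forall_and] using ⟨hl, k, hk, rfl⟩

theorem invCount_prod_le_length (l : List (Perm (Fin n))) (hl : ∀ s ∈ l, IsAdjTrans s) :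
    invCount l.prod ≤ l.length := by
  induction l using List.reverseRecOn with
  | nil => simp [invCount_one]
  | append_singleton m t ih =>
    obtain ⟨k, hk, rfl⟩ := isAdjTrans_iff.1 (hl t (by simp))
    have := ih fun s hs => hl s (by simp [hs])
    rw [List.prod_append, List.prod_singleton, List.length_append, List.length_singleton]
    rcases lt_or_gt_apply_adj m.prod hk with h | h
    · rw [invCount_mul_adjSwap h]; omega
    · have := invCount_mul_adjSwap_of_gt h; omega

theorem len_eq_invCount (x : Perm (Fin n)) : len x = invCount x := by
  obtain ⟨l, hl, hlen, hprod⟩ := exists_adjSwap_word x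
  refine le_antisymm (hlen ▸ Nat.sInf_le ⟨l, rfl, hl, hprod⟩) (le_csInf ⟨_, l, rfl, hl, hprod⟩ ?_)
  rintro _ ⟨l', rfl, hl', rfl⟩
  exact invCount_prod_le_length l' hl'

theorem exists_reduced_word (x : Perm (Fin n)) :
    ∃ l : List (Perm (Fin n)), (∀ s ∈ l, IsAdjTrans s) ∧ l.length = len x ∧ l.prod = x :=
  len_eq_invCount x ▸ exists_adjSwap_word x

theorem reduced_and_lt_of_reduced_append_adjSwap {m : List (Perm (Fin n))}
    (hm : ∀ s ∈ m, IsAdjTrans s) (hred : m.length + 1 = len (m.prod * adjSwap k hk)) :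
    m.length = len m.prod ∧ m.prod ⟨k, Nat.lt_of_succ_lt hk⟩ < m.prod ⟨k + 1, hk⟩ := by
  have := invCount_prod_le_length m hm
  rw [len_eq_invCount] at hred ⊢
  rcases lt_or_gt_apply_adj m.prod hk with h | h
  · have := invCount_mul_adjSwap h
    exact ⟨by omega, h⟩
  · have := invCount_mul_adjSwap_of_gt h
    omega

end Length

section Bruhat

variable {n : ℕ}

theorem rankLE_prod_of_sublist {l : List (Perm (Fin n))} (hl : ∀ s ∈ l, IsAdjTrans s)
    (hred : l.length = len l.prod) {l' : List (Perm (Fin n))} (hsub : l'.Sublist l) :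
    RankLE l'.prod l.prod := by
  induction l using List.reverseRecOn generalizing l' with
  | nil =>
    rw [List.sublist_nil.1 hsub]
    exact RankLE.refl _
  | append_singleton m t ih =>
    obtain ⟨k, hk, rfl⟩ := isAdjTrans_iff.1 (hl t (by simp))
    have hm : ∀ s ∈ m, IsAdjTrans s := fun s hs => hl s (by simp [hs])
    rw [List.prod_append, List.prod_singleton, List.length_append, List.length_singleton] at hred
    obtain ⟨hredm, hasc⟩ := reduced_and_lt_of_reduced_append_adjSwap hm hred
    obtain ⟨l₁, l₂, rfl, h₁, h₂⟩ := List.sublist_append_iff.1 hsub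
    rw [List.prod_append, List.prod_append, List.prod_singleton]
    rcases List.sublist_singleton.1 h₂ with rfl | rfl
    · simpa using (ih hm hredm h₁).mul_adjSwap_right (Or.inl hasc)
    · simpa using (ih hm hredm h₁).mul_adjSwap (Or.inl hasc)

theorem exists_sublist_prod_eq_of_rankLE {l : List (Perm (Fin n))}
    (hl : ∀ s ∈ l, IsAdjTrans s) (hred : l.length = len l.prod) {y : Perm (Fin n)}
    (hy : RankLE y l.prod) : ∃ l' : List (Perm (Fin n)), l'.Sublist l ∧ l'.prod = y := by
  induction l using List.reverseRecOn generalizing y with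
  | nil => exact ⟨[], List.Sublist.refl _, (eq_one_of_rankLE_one hy).symm⟩
  | append_singleton m t ih =>
    obtain ⟨k, hk, rfl⟩ := isAdjTrans_iff.1 (hl t (by simp))
    have hm : ∀ s ∈ m, IsAdjTrans s := fun s hs => hl s (by simp [hs])
    rw [List.prod_append, List.prod_singleton] at hred hy
    rw [List.length_append, List.length_singleton] at hred
    obtain ⟨hredm, -⟩ := reduced_and_lt_of_reduced_append_adjSwap hm hred
    rcases lt_or_gt_apply_adj y hk with hasc | hdesc
    · have h := hy.mul_adjSwap_right (Or.inr hasc)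
      rw [mul_assoc, adjSwap_mul_self, mul_one] at h
      obtain ⟨l', hsub, hprod⟩ := ih hm hredm h
      exact ⟨l', hsub.trans (List.sublist_append_left _ _), hprod⟩
    · have h := hy.mul_adjSwap (Or.inr hdesc)
      rw [mul_assoc, adjSwap_mul_self, mul_one] at h
      obtain ⟨l', hsub, hprod⟩ := ih hm hredm h
      refine ⟨l' ++ [adjSwap k hk], hsub.append (List.Sublist.refl _), ?_⟩
      simp [hprod, mul_assoc, adjSwap_mul_self]

theorem bruhatLE_iff_rankLE {y w : Perm (Fin n)} : BruhatLE y w ↔ RankLE y w := by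
  constructor
  · rintro ⟨l, hl, hlen, rfl, l', hsub, rfl⟩
    exact rankLE_prod_of_sublist hl hlen hsub
  · intro h
    obtain ⟨l, hl, hlen, rfl⟩ := exists_reduced_word w
    exact ⟨l, hl, hlen, rfl, exists_sublist_prod_eq_of_rankLE hl hlen h⟩

end Bruhat

section Cancellable

variable {n : ℕ}

theorem invi_add_rankCount (x : Perm (Fin n)) (i : Fin n) :
    invi x i + rankCount x i (x i) = i := by
  have split : ∀ p : Fin n, ((if p < i ∧ x i < x p then 1 else 0) +
      if (p : ℕ) < i ∧ (x p : ℕ) < x i then 1 else 0) = if (p : ℕ) < i then 1 else 0 := by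
    intro p
    by_cases hp : p = i
    · subst hp; simp
    · have := x.injective.ne hp
      simp only [Fin.lt_def] at this ⊢
      split_ifs <;> omega
  have hi : #{p : Fin n | (p : ℕ) < i} = i := by
    rw [Fin.card_filter_val_lt]; omega
  rw [invi, rankCount, card_filter, card_filter, ← sum_add_distrib,
    sum_congr rfl fun p _ => split p, ← card_filter, hi]

theorem rankCount_add_Invi (x : Perm (Fin n)) (i : Fin n) :
    rankCount x i (x i) + Invi x i = x i := by
  have split : ∀ p : Fin n, ((if (p : ℕ) < i ∧ (x p : ℕ) < x i then 1 else 0) +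
      if i < p ∧ x p < x i then 1 else 0) = if (x p : ℕ) < x i then 1 else 0 := by
    intro p
    by_cases hp : p = i
    · subst hp; simp
    · simp only [Fin.lt_def, Fin.ext_iff] at hp ⊢
      split_ifs <;> omega
  have hxi : #{p : Fin n | (x p : ℕ) < x i} = x i := by
    rw [card_equiv x (t := {v : Fin n | (v : ℕ) < x i}) (by simp), Fin.card_filter_val_lt]
    exact min_eq_right (x i).isLt.le
  rw [Invi, rankCount, card_filter, card_filter, ← sum_add_distrib,
    sum_congr rfl fun p _ => split p, ← card_filter, hxi]

theorem rankCount_apply_add_one (x : Perm (Fin n)) (i : Fin n) :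
    rankCount x i (x i + 1) = rankCount x i (x i) := by
  refine congrArg card (filter_congr fun p _ => ?_)
  rcases eq_or_ne p i with rfl | hp
  · simp
  · have := Fin.val_ne_of_ne (x.injective.ne hp)
    omega

theorem apply_eq_and_rankCount_eq_of_cancellable {y w x : Perm (Fin n)} {i : Fin n}
    (hval : y i = w i) (hinv : invi y i = invi w i) (hyx : RankLE y x) (hxw : RankLE x w) :
    x i = y i ∧ rankCount x i (x i) = rankCount y i (y i) := by
  have squeeze : ∀ a b, rankCount y a b = rankCount w a b →
      rankCount x a b = rankCount y a b := fun a b h => by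
    have := hyx a b
    have := hxw a b
    omega
  have hv : (y i : ℕ) = w i := by rw [hval]
  have h₀ : rankCount y i (y i) = rankCount w i (y i) := by
    have := invi_add_rankCount y i
    have := invi_add_rankCount w i
    rw [hv] at *
    omega
  have h₁ : rankCount y i (y i + 1) = rankCount w i (y i + 1) := by
    rw [rankCount_apply_add_one, hv, rankCount_apply_add_one, ← hv, h₀]
  have hsucc := fun (v : Perm (Fin n)) b => rankCount_succ v i.isLt b
  simp only [Fin.eta] at hsucc
  have e₀ := squeeze _ _ h₀
  have e₁ := squeeze _ _ h₁
  have e₂ := squeeze (i + 1) (y i) (by rw [hsucc, hsucc, h₀, ← hval])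
  have e₃ := squeeze (i + 1) (y i + 1) (by rw [hsucc, hsucc, h₁, ← hval])
  rw [hsucc, hsucc] at e₂ e₃
  have hxi : x i = y i := by
    apply Fin.ext
    split_ifs at e₂ e₃ <;> omega
  exact ⟨hxi, hxi ▸ e₀⟩

theorem invCount_eq_sum_invi (x : Perm (Fin n)) : invCount x = ∑ q, invi x q := by
  rw [invCount, inversions, card_filter, Fintype.sum_prod_type_right]
  simp only [invi, card_filter]

end Cancellable

section Hat

variable {d : ℕ} {i : Fin (d + 1)}

theorem exists_isHat (i : Fin (d + 1)) (x : Perm (Fin (d + 1))) : ∃ x', IsHat i x x' := by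
  let e : {p // p ≠ i} ≃ {v // v ≠ x i} := x.subtypeEquiv fun p => x.injective.ne_iff.symm
  refine ⟨(finSuccAboveEquiv i).trans (e.trans (finSuccAboveEquiv (x i)).symm), fun j => ?_⟩
  have h := (finSuccAboveEquiv (x i)).apply_symm_apply (e (finSuccAboveEquiv i j))
  exact (congrArg Subtype.val h).symm

theorem exists_apply_eq_isHat (i c : Fin (d + 1)) (z : Perm (Fin d)) :
    ∃ x : Perm (Fin (d + 1)), x i = c ∧ IsHat i x z :=
  ⟨((finSuccEquiv' i).trans z.optionCongr).trans (finSuccEquiv' c).symm, by simp,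
    fun j => by simp⟩

theorem rankCount_of_isHat {x : Perm (Fin (d + 1))} {x' : Perm (Fin d)} (hx : IsHat i x x')
    {a b A B : ℕ} (hA : ∀ j : Fin d, (i.succAbove j : ℕ) < A ↔ (j : ℕ) < a)
    (hB : ∀ v : Fin d, ((x i).succAbove v : ℕ) < B ↔ (v : ℕ) < b) :
    rankCount x A B = rankCount x' a b + if (i : ℕ) < A ∧ (x i : ℕ) < B then 1 else 0 := by
  unfold IsHat at hx
  simp only [rankCount, Fin.card_filter_univ_succAbove i, hx, hA, hB]

theorem rankLE_iff_of_isHat {x z : Perm (Fin (d + 1))} {x' z' : Perm (Fin d)}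
    (hx : IsHat i x x') (hz : IsHat i z z') (heq : x i = z i) : RankLE x z ↔ RankLE x' z' := by
  constructor
  · intro h a b
    obtain ⟨A, hA⟩ := Fin.exists_succAbove_val_lt_iff i a
    obtain ⟨B, hB⟩ := Fin.exists_succAbove_val_lt_iff (x i) b
    have := h A B
    rw [rankCount_of_isHat hx hA hB, rankCount_of_isHat hz hA (heq ▸ hB), heq] at this
    omega
  · intro h A B
    obtain ⟨a, hA⟩ := Fin.exists_val_lt_iff_succAbove_val_lt i A
    obtain ⟨b, hB⟩ := Fin.exists_val_lt_iff_succAbove_val_lt (x i) B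
    rw [rankCount_of_isHat hx hA hB, rankCount_of_isHat hz hA (heq ▸ hB), heq]
    exact Nat.add_le_add_right (h a b) _

theorem invCount_eq_of_isHat {x : Perm (Fin (d + 1))} {x' : Perm (Fin d)} (hx : IsHat i x x') :
    invCount x = invCount x' + invi x i + Invi x i := by
  have hinvi : ∀ j, invi x (i.succAbove j) =
      invi x' j + if i < i.succAbove j ∧ x (i.succAbove j) < x i then 1 else 0 := fun j => by
    unfold IsHat at hx
    simp only [invi, Fin.card_filter_univ_succAbove i, hx, Fin.succAbove_lt_succAbove_iff]
  have hInvi : Invi x i = ∑ j, if i < i.succAbove j ∧ x (i.succAbove j) < x i then 1 else 0 := by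
    rw [Invi, Fin.card_filter_univ_succAbove i, card_filter, if_neg (by simp), add_zero]
  rw [invCount_eq_sum_invi, invCount_eq_sum_invi, Fin.sum_univ_succAbove _ i, hInvi]
  simp only [hinvi, sum_add_distrib]
  ring

theorem len_add_two_mul_rankCount_of_isHat {x : Perm (Fin (d + 1))} {x' : Perm (Fin d)}
    (hx : IsHat i x x') : len x + 2 * rankCount x i (x i) = len x' + i + x i := by
  have := invi_add_rankCount x i
  have := rankCount_add_Invi x i
  rw [len_eq_invCount, len_eq_invCount, invCount_eq_of_isHat hx]
  omega

end Hat

theorem stmt6_general (d : ℕ) (y w : Perm (Fin (d + 1))) (i : Fin (d + 1))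
    (hval : y i = w i) (hinv : invi y i = invi w i)
    (y' w' : Perm (Fin d)) (hy' : IsHat i y y') (hw' : IsHat i w w') :
    -- the map is total on the interval
    (∀ x, BruhatLE y x → BruhatLE x w → ∃ x', IsHat i x x') ∧
    -- it maps into [y^î, w^î] and reduces all lengths by the same amount
    (∀ x x', BruhatLE y x → BruhatLE x w → IsHat i x x' →
      BruhatLE y' x' ∧ BruhatLE x' w' ∧ len x' + len y = len x + len y') ∧
    -- it is order-preserving and order-reflecting
    (∀ x₁ x₂ x₁' x₂', BruhatLE y x₁ → BruhatLE x₁ w → BruhatLE y x₂ → BruhatLE x₂ w →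
      IsHat i x₁ x₁' → IsHat i x₂ x₂' → (BruhatLE x₁ x₂ ↔ BruhatLE x₁' x₂')) ∧
    -- it is surjective onto [y^î, w^î]
    (∀ z, BruhatLE y' z → BruhatLE z w' →
      ∃ x, BruhatLE y x ∧ BruhatLE x w ∧ IsHat i x z) := by
  simp only [bruhatLE_iff_rankLE]
  have hmem := fun x => apply_eq_and_rankCount_eq_of_cancellable (x := x) hval hinv
  refine ⟨fun x _ _ => exists_isHat i x, ?_, ?_, ?_⟩
  · intro x x' hyx hxw hx
    obtain ⟨hxi, hrank⟩ := hmem x hyx hxw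
    refine ⟨(rankLE_iff_of_isHat hy' hx hxi.symm).1 hyx,
      (rankLE_iff_of_isHat hx hw' (hxi.trans hval)).1 hxw, ?_⟩
    have hlx := len_add_two_mul_rankCount_of_isHat hx
    have hly := len_add_two_mul_rankCount_of_isHat hy'
    rw [hrank, hxi] at hlx
    omega
  · intro x₁ x₂ x₁' x₂' hyx₁ hx₁w hyx₂ hx₂w h₁ h₂
    exact rankLE_iff_of_isHat h₁ h₂ ((hmem x₁ hyx₁ hx₁w).1.trans (hmem x₂ hyx₂ hx₂w).1.symm)
  · intro z hy'z hzw'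
    obtain ⟨x, hxi, hx⟩ := exists_apply_eq_isHat i (y i) z
    exact ⟨x, (rankLE_iff_of_isHat hy' hx hxi.symm).2 hy'z,
      (rankLE_iff_of_isHat hx hw' (hxi.trans hval)).2 hzw', hx⟩

/-- if `i` is cancellable for `[y,w]`, then `x ↦ x^{î}` is a poset isomorphism
from the Bruhat interval `[y,w]` in `S_d` onto `[y^{î}, w^{î}]` in `S_{d-1}`, reducing all
lengths by the same amount. -/
theorem stmt6 (d : ℕ) (y w : Perm (Fin (d + 1))) (i : Fin (d + 1))
    (hyw : BruhatLE y w) (hval : y i = w i) (hinv : invi y i = invi w i)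
    (y' w' : Perm (Fin d)) (hy' : IsHat i y y') (hw' : IsHat i w w') :
    -- the map is total on the interval
    (∀ x, BruhatLE y x → BruhatLE x w → ∃ x', IsHat i x x') ∧
    -- it maps into [y^î, w^î] and reduces all lengths by the same amount
    (∀ x x', BruhatLE y x → BruhatLE x w → IsHat i x x' →
      BruhatLE y' x' ∧ BruhatLE x' w' ∧ len x' + len y = len x + len y') ∧
    -- it is order-preserving and order-reflecting
    (∀ x₁ x₂ x₁' x₂', BruhatLE y x₁ → BruhatLE x₁ w → BruhatLE y x₂ → BruhatLE x₂ w →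
      IsHat i x₁ x₁' → IsHat i x₂ x₂' → (BruhatLE x₁ x₂ ↔ BruhatLE x₁' x₂')) ∧
    -- it is surjective onto [y^î, w^î]
    (∀ z, BruhatLE y' z → BruhatLE z w' →
      ∃ x, BruhatLE y x ∧ BruhatLE x w ∧ IsHat i x z) :=
  stmt6_general d y w i hval hinv y' w' hy' hw'
end

section
/- Let Ŝ_d be the group of permutations w of ℤ satisfying w(i+d) = w(i)+d for all i. For w in Ŝ_d, define a(w) = (Σ_{i=1}^d w(i) − Σ_{i=1}^d i)/d, inv_i(w) = |{i' < i : w(i') > w(i)}|, and Inv_i(w) = |{i' > i : w(i') < w(i)}| (both finite). Then Inv_i(w) − inv_i(w) = w(i) − i − a(w). -/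
open Equiv

/-- `inv_i(w) = |{i' < i : w(i') > w(i)}|` for `w` a permutation of `ℤ`. -/
noncomputable def ainv (w : Perm ℤ) (i : ℤ) : ℕ :=
  {i' : ℤ | i' < i ∧ w i < w i'}.ncard

/-- `Inv_i(w) = |{i' > i : w(i') < w(i)}|` for `w` a permutation of `ℤ`. -/
noncomputable def aInv (w : Perm ℤ) (i : ℤ) : ℕ :=
  {i' : ℤ | i < i' ∧ w i' < w i}.ncard

/-- `a(w) = (Σ_{k=1}^d w(k) − Σ_{k=1}^d k)/d`. -/
noncomputable def aShift (d : ℕ) (w : Perm ℤ) : ℤ :=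
  (∑ k ∈ Finset.Icc (1 : ℤ) (d : ℤ), (w k - k)) / (d : ℤ)

/-!
Split `ℤ` into the residue classes `r + dℤ`, `r = 1, …, d`. By periodicity, the members of the
class of `r` counted by `Inv_i(w)`, resp. `inv_i(w)`, correspond to the multiples of `d` lying
strictly between `i - r` and `w(i) - w(r)` in one, resp. the other, direction. Their signed number
is `⌊(w(i) - w(r))/d⌋ - ⌊(i - r)/d⌋`: either neither end is a multiple of `d`, or `r ≡ i` and the
two ends coincide. Multiplying by `d` turns each floor into the number minus its residue, and since
`w` permutes the residues mod `d`, the residues of `w(i) - w(r)` and of `i - r` both run over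
`0, …, d - 1`. What is left is `d (w(i) - i) - ∑_r (w(r) - r)`; in particular the division
defining `a(w)` is exact.
-/

namespace Int

variable {d : ℤ}

lemma eq_of_modEq_of_mem_Icc {a b : ℤ} (h : a ≡ b [ZMOD d]) (ha : a ∈ Finset.Icc 1 d)
    (hb : b ∈ Finset.Icc 1 d) : a = b := by
  rw [Finset.mem_Icc] at ha hb
  have := Int.eq_zero_of_abs_lt_dvd (Int.modEq_iff_dvd.mp h) (abs_lt.mpr ⟨by omega, by omega⟩)
  omega

lemma setOf_lt_mul_lt_subset_Ioc (hd : 0 < d) (A B : ℤ) :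
    {k : ℤ | A < k * d ∧ k * d < B} ⊆ Set.Ioc (A / d) (B / d) :=
  fun _ ⟨hA, hB⟩ => ⟨(Int.ediv_lt_iff_lt_mul hd).mpr hA, (Int.le_ediv_iff_mul_le hd).mpr hB.le⟩

lemma setOf_lt_mul_lt_eq_Ioc (hd : 0 < d) (A : ℤ) {B : ℤ} (hB : ¬ d ∣ B) :
    {k : ℤ | A < k * d ∧ k * d < B} = Set.Ioc (A / d) (B / d) := by
  refine (setOf_lt_mul_lt_subset_Ioc hd A B).antisymm fun k ⟨hA, hB'⟩ => ?_
  have hle := (Int.le_ediv_iff_mul_le hd).mp hB'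
  have hne : k * d ≠ B := fun h => hB ⟨k, by rw [← h, mul_comm]⟩
  exact ⟨(Int.ediv_lt_iff_lt_mul hd).mp hA, lt_of_le_of_ne hle hne⟩

lemma ncard_Ioc (a b : ℤ) : (Set.Ioc a b).ncard = (b - a).toNat := by
  rw [← Finset.coe_Ioc, Set.ncard_coe_finset, Int.card_Ioc]

lemma ncard_lt_mul_lt_sub_ncard (hd : 0 < d) {A B : ℤ} (hA : ¬ d ∣ A) (hB : ¬ d ∣ B) :
    ({k : ℤ | A < k * d ∧ k * d < B}.ncard : ℤ) - {k : ℤ | B < k * d ∧ k * d < A}.ncard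
      = B / d - A / d := by
  rw [setOf_lt_mul_lt_eq_Ioc hd A hB, setOf_lt_mul_lt_eq_Ioc hd B hA, ncard_Ioc, ncard_Ioc,
    ← neg_sub (B / d), Int.toNat_sub_toNat_neg]

lemma ncard_eq_sum_Icc_ncard_add_mul (hd : 0 < d) {S : Set ℤ}
    (hS : ∀ r, {k : ℤ | r + k * d ∈ S}.Finite) :
    S.ncard = ∑ r ∈ Finset.Icc 1 d, {k : ℤ | r + k * d ∈ S}.ncard := by
  have hcover : S = ⋃ r ∈ (Finset.Icc 1 d : Set ℤ), (r + · * d) '' {k : ℤ | r + k * d ∈ S} := by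
    ext j
    simp only [Set.mem_iUnion, Set.mem_image, Finset.coe_Icc, Set.mem_Icc]
    constructor
    · intro hj
      have hj' : (j - 1) % d + 1 + (j - 1) / d * d = j := by
        linarith [mul_ediv_add_emod (j - 1) d, mul_comm d ((j - 1) / d)]
      refine ⟨(j - 1) % d + 1, ⟨?_, ?_⟩, (j - 1) / d, ?_, hj'⟩
      · linarith [emod_nonneg (j - 1) hd.ne']
      · linarith [emod_lt_of_pos (j - 1) hd]
      · show (j - 1) % d + 1 + (j - 1) / d * d ∈ S
        rwa [hj']
    · rintro ⟨r, -, k, hk, rfl⟩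
      exact hk
  have hdisj : (Finset.Icc 1 d : Set ℤ).PairwiseDisjoint
      fun r => (r + · * d) '' {k : ℤ | r + k * d ∈ S} := by
    intro r hr r' hr' hne
    refine Set.disjoint_left.mpr ?_
    rintro _ ⟨k, -, rfl⟩ ⟨k', -, he⟩
    refine hne (eq_of_modEq_of_mem_Icc ?_ hr hr')
    calc r ≡ r + k * d [ZMOD d] := (add_mul_emod_self_right r k d).symm
      _ = r' + k' * d := he.symm
      _ ≡ r' [ZMOD d] := add_mul_emod_self_right r' k' d
  conv_lhs => rw [hcover]
  rw [Set.Finite.ncard_biUnion (Finset.finite_toSet _) (fun r _ => (hS r).image _) hdisj,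
    finsum_mem_coe_finset]
  refine Finset.sum_congr rfl fun r _ => Set.ncard_image_of_injective _ fun k k' h => ?_
  exact mul_right_cancel₀ hd.ne' (add_left_cancel h)

lemma sum_Icc_emod_eq_sum_Ico (hd : 0 < d) {f : ℤ → ℤ}
    (hf : ∀ a b, f a ≡ f b [ZMOD d] → a ≡ b [ZMOD d]) :
    ∑ r ∈ Finset.Icc 1 d, f r % d = ∑ j ∈ Finset.Ico 0 d, j := by
  have hinj : Set.InjOn (f · % d) (Finset.Icc 1 d) := fun a ha b hb h =>
    eq_of_modEq_of_mem_Icc (hf a b h) ha hb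
  have himage : (Finset.Icc 1 d).image (f · % d) = Finset.Ico 0 d := by
    refine Finset.eq_of_subset_of_card_le (fun j hj => ?_) ?_
    · obtain ⟨r, -, rfl⟩ := Finset.mem_image.mp hj
      exact Finset.mem_Ico.mpr ⟨emod_nonneg _ hd.ne', emod_lt_of_pos _ hd⟩
    · rw [Finset.card_image_of_injOn hinj, Int.card_Icc, Int.card_Ico]
      omega
  rw [← himage, Finset.sum_image hinj]

end Int

section Periodic

variable {d : ℕ} {w : Perm ℤ}

lemma apply_add_mul_of_periodic (hw : ∀ i : ℤ, w (i + d) = w i + d) (j k : ℤ) :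
    w (j + k * d) = w j + k * d := by
  induction k using Int.induction_on with
  | zero => simp
  | succ n ih => rw [add_one_mul, ← add_assoc, hw, ih, add_assoc]
  | pred n ih =>
    have h := hw (j + (-n - 1) * d)
    rw [add_assoc, ← add_one_mul, sub_add_cancel, ih] at h
    linarith

lemma modEq_apply_iff_of_periodic (hw : ∀ i : ℤ, w (i + d) = w i + d) {a b : ℤ} :
    w a ≡ w b [ZMOD d] ↔ a ≡ b [ZMOD d] := by
  simp only [Int.modEq_iff_dvd]
  constructor
  · rintro ⟨t, ht⟩
    have h : w (a + t * d) = w b := by rw [apply_add_mul_of_periodic hw]; linarith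
    exact ⟨t, by linarith [w.injective h]⟩
  · rintro ⟨t, ht⟩
    have h := apply_add_mul_of_periodic hw a t
    rw [show a + t * d = b by linarith] at h
    exact ⟨t, by linarith⟩

lemma ncard_sub_ncard_residue_of_periodic (hd : 0 < d) (hw : ∀ i : ℤ, w (i + d) = w i + d)
    (i r : ℤ) :
    ({k : ℤ | i - r < k * d ∧ k * d < w i - w r}.ncard : ℤ)
        - {k : ℤ | w i - w r < k * d ∧ k * d < i - r}.ncard
      = (w i - w r) / d - (i - r) / d := by
  by_cases hA : (d : ℤ) ∣ i - r
  · obtain ⟨t, ht⟩ := hA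
    have h := apply_add_mul_of_periodic hw r t
    rw [show r + t * d = i by linarith] at h
    rw [show w i - w r = i - r by linarith, sub_self, sub_self]
  · have hB : ¬ (d : ℤ) ∣ w i - w r := by
      rwa [← Int.modEq_iff_dvd, modEq_apply_iff_of_periodic hw, Int.modEq_iff_dvd]
    exact Int.ncard_lt_mul_lt_sub_ncard (by exact_mod_cast hd) hA hB

lemma aInv_eq_sum_of_periodic (hd : 0 < d) (hw : ∀ i : ℤ, w (i + d) = w i + d) (i : ℤ) :
    aInv w i = ∑ r ∈ Finset.Icc 1 (d : ℤ), {k : ℤ | i - r < k * d ∧ k * d < w i - w r}.ncard := by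
  have hfiber (r : ℤ) : {k : ℤ | r + k * d ∈ {i' | i < i' ∧ w i' < w i}}
      = {k : ℤ | i - r < k * d ∧ k * d < w i - w r} := by
    simp only [Set.mem_ofPred_eq, sub_lt_iff_lt_add', lt_sub_iff_add_lt',
      apply_add_mul_of_periodic hw]
  have hd' : (0 : ℤ) < d := by exact_mod_cast hd
  rw [aInv, Int.ncard_eq_sum_Icc_ncard_add_mul hd' fun r => ?_]
  · simp only [hfiber]
  · rw [hfiber]
    exact (Set.finite_Ioc _ _).subset (Int.setOf_lt_mul_lt_subset_Ioc hd' _ _)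

lemma ainv_eq_sum_of_periodic (hd : 0 < d) (hw : ∀ i : ℤ, w (i + d) = w i + d) (i : ℤ) :
    ainv w i = ∑ r ∈ Finset.Icc 1 (d : ℤ), {k : ℤ | w i - w r < k * d ∧ k * d < i - r}.ncard := by
  have hfiber (r : ℤ) : {k : ℤ | r + k * d ∈ {i' | i' < i ∧ w i < w i'}}
      = {k : ℤ | w i - w r < k * d ∧ k * d < i - r} := by
    ext k
    simp only [Set.mem_ofPred_eq, sub_lt_iff_lt_add', lt_sub_iff_add_lt',
      apply_add_mul_of_periodic hw, and_comm]
  have hd' : (0 : ℤ) < d := by exact_mod_cast hd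
  rw [ainv, Int.ncard_eq_sum_Icc_ncard_add_mul hd' fun r => ?_]
  · simp only [hfiber]
  · rw [hfiber]
    exact (Set.finite_Ioc _ _).subset (Int.setOf_lt_mul_lt_subset_Ioc hd' _ _)

lemma aInv_sub_ainv_eq_sum_of_periodic (hd : 0 < d) (hw : ∀ i : ℤ, w (i + d) = w i + d)
    (i : ℤ) :
    (aInv w i : ℤ) - ainv w i = ∑ r ∈ Finset.Icc 1 (d : ℤ), ((w i - w r) / d - (i - r) / d) := by
  rw [aInv_eq_sum_of_periodic hd hw, ainv_eq_sum_of_periodic hd hw]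
  push_cast
  rw [← Finset.sum_sub_distrib]
  exact Finset.sum_congr rfl fun r _ => ncard_sub_ncard_residue_of_periodic hd hw i r

lemma sum_emod_sub_apply_of_periodic (hd : 0 < d) (hw : ∀ i : ℤ, w (i + d) = w i + d) (i : ℤ) :
    ∑ r ∈ Finset.Icc 1 (d : ℤ), (w i - w r) % d = ∑ r ∈ Finset.Icc 1 (d : ℤ), (i - r) % d := by
  have hd' : (0 : ℤ) < d := by exact_mod_cast hd
  rw [Int.sum_Icc_emod_eq_sum_Ico hd' fun a b h => ?_,
    Int.sum_Icc_emod_eq_sum_Ico hd' fun a b h => by simpa using h.sub_left i]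
  exact (modEq_apply_iff_of_periodic hw).mp (by simpa using h.sub_left (w i))

lemma mul_sum_ediv_sub_ediv_of_periodic (hd : 0 < d) (hw : ∀ i : ℤ, w (i + d) = w i + d)
    (i : ℤ) :
    (d : ℤ) * ∑ r ∈ Finset.Icc 1 (d : ℤ), ((w i - w r) / d - (i - r) / d)
      = d * (w i - i) - ∑ r ∈ Finset.Icc 1 (d : ℤ), (w r - r) := by
  have hconst (c : ℤ) : ∑ _r ∈ Finset.Icc 1 (d : ℤ), c = d * c := by simp
  have hsub : ∑ r ∈ Finset.Icc 1 (d : ℤ), (i - r) = d * i - ∑ r ∈ Finset.Icc 1 (d : ℤ), r := by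
    rw [Finset.sum_sub_distrib, hconst]
  calc (d : ℤ) * ∑ r ∈ Finset.Icc 1 (d : ℤ), ((w i - w r) / d - (i - r) / d)
      = ∑ r ∈ Finset.Icc 1 (d : ℤ),
          ((w i - w r) - (w i - w r) % d - ((i - r) - (i - r) % d)) := by
        rw [Finset.mul_sum]
        refine Finset.sum_congr rfl fun r _ => ?_
        linarith [Int.mul_ediv_add_emod (w i - w r) d, Int.mul_ediv_add_emod (i - r) d]
    _ = d * (w i - i) - ∑ r ∈ Finset.Icc 1 (d : ℤ), (w r - r) := by
        simp only [Finset.sum_sub_distrib, hconst, hsub, sum_emod_sub_apply_of_periodic hd hw]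
        ring

end Periodic

/-- for `w` in the extended affine symmetric group `Ŝ_d`,
`Inv_i(w) − inv_i(w) = w(i) − i − a(w)`. -/
theorem stmt15 (d : ℕ) (hd : 0 < d) (w : Perm ℤ)
    (hw : ∀ i : ℤ, w (i + d) = w i + d) (i : ℤ) :
    (aInv w i : ℤ) - (ainv w i : ℤ) = w i - i - aShift d w := by
  set X := ∑ r ∈ Finset.Icc 1 (d : ℤ), ((w i - w r) / d - (i - r) / d)
  have hsum : ∑ r ∈ Finset.Icc 1 (d : ℤ), (w r - r) = d * (w i - i - X) := by
    linarith [mul_sum_ediv_sub_ediv_of_periodic hd hw i]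
  rw [aInv_sub_ainv_eq_sum_of_periodic hd hw, aShift, hsum,
    Int.mul_ediv_cancel_left _ (by exact_mod_cast hd.ne')]
  ring
end

section
/- Suppose m ≤ m' in M_{(b_i);(c_j)} and (i,j) is cancellable for [m,m'], meaning m_{i,j} ≥ 1, m_{≤i−1,≥j} = m'_{≤i−1,≥j}, and m_{≤i,≥j+1} = m'_{≤i,≥j+1}. Then for any m¹ with m ≤ m¹ ≤ m', one has m¹_{i,j} ≥ m_{i,j}, m¹_{≤i−1,≥j} = m_{≤i−1,≥j}, and m¹_{≤i,≥j+1} = m_{≤i,≥j+1}. -/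
open Finset

/-- `m` lies in `M_{(b_i);(c_j)}`: an `n × n'` matrix of nonnegative integers
with row sums `b i` and column sums `c j`. -/
def MemM {n n' : ℕ} (b : Fin n → ℕ) (c : Fin n' → ℕ) (m : Fin n → Fin n' → ℕ) : Prop :=
  (∀ i, ∑ j, m i j = b i) ∧ (∀ j, ∑ i, m i j = c j)

/-- `m_{≤i,≥j} = Σ_{i'≤i, j'≥j} m_{i',j'}`. -/
def sUR {n n' : ℕ} (m : Fin n → Fin n' → ℕ) (i : Fin n) (j : Fin n') : ℕ :=
  ∑ i' ∈ Finset.univ.filter (fun i' => i' ≤ i),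
    ∑ j' ∈ Finset.univ.filter (fun j' => j ≤ j'), m i' j'

/-- The partial order on `M_{(b_i);(c_j)}`: `m ≤ m'` iff `m_{≤i,≥j} ≤ m'_{≤i,≥j}` for all `i,j`. -/
def MatLE {n n' : ℕ} (m m' : Fin n → Fin n' → ℕ) : Prop :=
  ∀ (i : Fin n) (j : Fin n'), sUR m i j ≤ sUR m' i j

/-- `m_{≤i−1,≥j} = Σ_{i'<i, j'≥j} m_{i',j'}`. -/
def sURrow {n n' : ℕ} (m : Fin n → Fin n' → ℕ) (i : Fin n) (j : Fin n') : ℕ :=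
  ∑ i' ∈ Finset.univ.filter (fun i' => i' < i),
    ∑ j' ∈ Finset.univ.filter (fun j' => j ≤ j'), m i' j'

/-- `m_{≤i,≥j+1} = Σ_{i'≤i, j'>j} m_{i',j'}`. -/
def sURcol {n n' : ℕ} (m : Fin n → Fin n' → ℕ) (i : Fin n) (j : Fin n') : ℕ :=
  ∑ i' ∈ Finset.univ.filter (fun i' => i' ≤ i),
    ∑ j' ∈ Finset.univ.filter (fun j' => j < j'), m i' j'

/-- `(i,j)` is cancellable for the interval `[m,m']`: `m_{i,j} ≥ 1`,
`m_{≤i−1,≥j} = m'_{≤i−1,≥j}` and `m_{≤i,≥j+1} = m'_{≤i,≥j+1}`. -/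
def Cancellable {n n' : ℕ} (m m' : Fin n → Fin n' → ℕ) (i : Fin n) (j : Fin n') : Prop :=
  1 ≤ m i j ∧ sURrow m i j = sURrow m' i j ∧ sURcol m i j = sURcol m' i j


section Aux
variable {n n' : ℕ}

private lemma tfilter_le (i : Fin n) :
    Finset.univ.filter (fun i' : Fin n => i' ≤ i) = Finset.Iic i := by ext x; simp

private lemma tfilter_lt (i : Fin n) :
    Finset.univ.filter (fun i' : Fin n => i' < i) = Finset.Iio i := by ext x; simp

private lemma tfilter_ge (j : Fin n') :
    Finset.univ.filter (fun j' : Fin n' => j ≤ j') = Finset.Ici j := by ext x; simp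

private lemma tfilter_gt (j : Fin n') :
    Finset.univ.filter (fun j' : Fin n' => j < j') = Finset.Ioi j := by ext x; simp

/-- `Σ_{i'<i, j'>j} m i' j'`. -/
private def tUR (m : Fin n → Fin n' → ℕ) (i : Fin n) (j : Fin n') : ℕ :=
  ∑ i' ∈ Finset.Iio i, ∑ j' ∈ Finset.Ioi j, m i' j'

private lemma identityUR (m : Fin n → Fin n' → ℕ) (i : Fin n) (j : Fin n') :
    sUR m i j + tUR m i j = sURrow m i j + sURcol m i j + m i j := by
  unfold sUR sURrow sURcol tUR
  rw [tfilter_le, tfilter_lt, tfilter_ge, tfilter_gt,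
    ← Finset.Iio_insert i, Finset.sum_insert (by simp),
    ← Finset.Ioi_insert j, Finset.sum_insert (by simp)]
  have : ∀ i' ∈ Finset.Iio i, ∑ j' ∈ insert j (Finset.Ioi j), m i' j'
      = m i' j + ∑ j' ∈ Finset.Ioi j, m i' j' := by
    intro i' _
    rw [Finset.sum_insert (by simp)]
  rw [Finset.sum_congr rfl this, Finset.sum_add_distrib,
    Finset.sum_insert (by simp : i ∉ Finset.Iio i)]
  ring

private lemma row_le {m m1 : Fin n → Fin n' → ℕ} (h : MatLE m m1) (i : Fin n) (j : Fin n') :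
    sURrow m i j ≤ sURrow m1 i j := by
  rcases Nat.eq_zero_or_pos i.val with h0 | hp
  · have he : Finset.univ.filter (fun i' : Fin n => i' < i) = ∅ := by
      ext x; simp [Fin.lt_def, h0]
    unfold sURrow
    rw [he]; simp
  · set i0 : Fin n := ⟨i.val - 1, lt_of_le_of_lt (Nat.pred_le _) i.isLt⟩ with hi0
    have hf : Finset.univ.filter (fun i' : Fin n => i' < i)
        = Finset.univ.filter (fun i' : Fin n => i' ≤ i0) := by
      ext x
      simp only [Finset.mem_filter, Finset.mem_univ, true_and, Fin.lt_def, Fin.le_def, hi0]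
      omega
    unfold sURrow
    rw [hf]
    exact h i0 j

private lemma col_le {m m1 : Fin n → Fin n' → ℕ} (h : MatLE m m1) (i : Fin n) (j : Fin n') :
    sURcol m i j ≤ sURcol m1 i j := by
  rcases lt_or_ge (j.val + 1) n' with hp | h0
  · set j0 : Fin n' := ⟨j.val + 1, hp⟩ with hj0
    have hf : Finset.univ.filter (fun j' : Fin n' => j < j')
        = Finset.univ.filter (fun j' : Fin n' => j0 ≤ j') := by
      ext x
      simp only [Finset.mem_filter, Finset.mem_univ, true_and, Fin.lt_def, Fin.le_def, hj0]
      omega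
    unfold sURcol
    rw [hf]
    exact h i j0
  · have he : Finset.univ.filter (fun j' : Fin n' => j < j') = ∅ := by
      ext x
      simp only [Finset.mem_filter, Finset.mem_univ, true_and, Fin.lt_def,
        Finset.notMem_empty, iff_false]
      omega
    unfold sURcol
    rw [he]; simp

private lemma t_le {m m1 : Fin n → Fin n' → ℕ} (h : MatLE m m1) (i : Fin n) (j : Fin n') :
    tUR m i j ≤ tUR m1 i j := by
  rcases Nat.eq_zero_or_pos i.val with h0 | hp
  · have he : Finset.Iio i = ∅ := by
      ext x; simp [Fin.lt_def, h0]
    unfold tUR; rw [he]; simp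
  rcases lt_or_ge (j.val + 1) n' with hq | hq
  · set i0 : Fin n := ⟨i.val - 1, lt_of_le_of_lt (Nat.pred_le _) i.isLt⟩ with hi0
    set j0 : Fin n' := ⟨j.val + 1, hq⟩ with hj0
    have hfi : Finset.Iio i = Finset.univ.filter (fun i' : Fin n => i' ≤ i0) := by
      ext x
      simp only [Finset.mem_Iio, Finset.mem_filter, Finset.mem_univ, true_and,
        Fin.lt_def, Fin.le_def, hi0]
      omega
    have hfj : Finset.Ioi j = Finset.univ.filter (fun j' : Fin n' => j0 ≤ j') := by
      ext x
      simp only [Finset.mem_Ioi, Finset.mem_filter, Finset.mem_univ, true_and,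
        Fin.lt_def, Fin.le_def, hj0]
      omega
    unfold tUR
    rw [hfi, hfj]
    exact h i0 j0
  · have he : Finset.Ioi j = ∅ := by
      ext x
      simp only [Finset.mem_Ioi, Fin.lt_def, Finset.notMem_empty, iff_false]
      omega
    unfold tUR; rw [he]; simp

end Aux

/-- if `(i,j)` is cancellable for `[m,m']`, then every `m¹` with
`m ≤ m¹ ≤ m'` satisfies `m¹_{i,j} ≥ m_{i,j}`, `m¹_{≤i−1,≥j} = m_{≤i−1,≥j}` and
`m¹_{≤i,≥j+1} = m_{≤i,≥j+1}`. -/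
theorem stmt18 (n n' : ℕ) (b : Fin n → ℕ) (c : Fin n' → ℕ)
    (m m' m1 : Fin n → Fin n' → ℕ)
    (hm : MemM b c m) (hm' : MemM b c m') (hm1 : MemM b c m1)
    (hord : MatLE m m') (i : Fin n) (j : Fin n')
    (hcanc : Cancellable m m' i j)
    (h1 : MatLE m m1) (h2 : MatLE m1 m') :
    m i j ≤ m1 i j ∧ sURrow m1 i j = sURrow m i j ∧ sURcol m1 i j = sURcol m i j := by
  obtain ⟨hge1, hrow, hcol⟩ := hcanc
  have hrowe : sURrow m1 i j = sURrow m i j :=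
    le_antisymm (hrow ▸ row_le h2 i j) (row_le h1 i j)
  have hcole : sURcol m1 i j = sURcol m i j :=
    le_antisymm (hcol ▸ col_le h2 i j) (col_le h1 i j)
  refine ⟨?_, hrowe, hcole⟩
  have e1 := identityUR m i j
  have e2 := identityUR m1 i j
  have hs := h1 i j
  have ht := t_le h1 i j
  omega
end

section
/- Suppose m ≤ m' in M_{(b_i);(c_j)} and (i,j) is cancellable for [m,m'] (m_{i,j} ≥ 1, m_{≤i−1,≥j} = m'_{≤i−1,≥j}, m_{≤i,≥j+1} = m'_{≤i,≥j+1}). Let e be the matrix with e_{i,j}=1 and all other entries 0. Then the map m¹ ↦ m¹ − e is an order isomorphism from the interval [m, m'] in M_{(b_i);(c_j)} onto the interval [m−e, m'−e] in M_{(b̃_i);(c̃_j)}, where b̃_{i'} = b_{i'} − δ_{i,i'} and c̃_{j'} = c_{j'} − δ_{j,j'}. -/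
open Finset

/-- The matrix `m − e`, where `e` has a single `1` in position `(i,j)`. -/
def subE {n n' : ℕ} (m : Fin n → Fin n' → ℕ) (i : Fin n) (j : Fin n') :
    Fin n → Fin n' → ℕ :=
  fun i' j' => if i' = i ∧ j' = j then m i' j' - 1 else m i' j'

namespace S19

variable {n n' : ℕ}

def D {n n' : ℕ} (m : Fin n → Fin n' → ℕ) (i : Fin n) (j : Fin n') : ℕ :=
  ∑ i' ∈ Finset.univ.filter (fun i' => i' < i),
    ∑ j' ∈ Finset.univ.filter (fun j' => j < j'), m i' j'

lemma split_le (i : Fin n) (f : Fin n → ℕ) :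
    ∑ i' ∈ univ.filter (fun i' => i' ≤ i), f i'
      = f i + ∑ i' ∈ univ.filter (fun i' => i' < i), f i' := by
  have h : univ.filter (fun i' => i' ≤ i) = insert i (univ.filter (fun i' => i' < i)) := by
    ext a
    simp only [Finset.mem_filter, Finset.mem_univ, true_and, Finset.mem_insert, Fin.le_def, Fin.lt_def, Fin.ext_iff]
    omega
  rw [h, Finset.sum_insert (by simp)]

lemma split_ge (j : Fin n') (g : Fin n' → ℕ) :
    ∑ j' ∈ univ.filter (fun j' => j ≤ j'), g j'
      = g j + ∑ j' ∈ univ.filter (fun j' => j < j'), g j' := by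
  have h : univ.filter (fun j' => j ≤ j') = insert j (univ.filter (fun j' => j < j')) := by
    ext a
    simp only [Finset.mem_filter, Finset.mem_univ, true_and, Finset.mem_insert, Fin.le_def, Fin.lt_def, Fin.ext_iff]
    omega
  rw [h, Finset.sum_insert (by simp)]

lemma identity (x : Fin n → Fin n' → ℕ) (i : Fin n) (j : Fin n') :
    sUR x i j + D x i j = x i j + sURrow x i j + sURcol x i j := by
  unfold sUR sURrow sURcol D
  rw [split_le i (fun i' => ∑ j' ∈ univ.filter (fun j' => j ≤ j'), x i' j'),
      split_le i (fun i' => ∑ j' ∈ univ.filter (fun j' => j < j'), x i' j'),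
      split_ge j (fun j' => x i j')]
  ring

lemma sURrow_zero (x : Fin n → Fin n' → ℕ) (i : Fin n) (hi : i.val = 0) (j : Fin n') :
    sURrow x i j = 0 := by
  unfold sURrow
  rw [Finset.filter_false_of_mem, Finset.sum_empty]
  intro a _
  simp only [Fin.lt_def, hi]
  omega

lemma sURrow_eq (x : Fin n → Fin n' → ℕ) (i : Fin n) (hi : i.val ≠ 0) (j : Fin n') :
    sURrow x i j = sUR x ⟨i.val - 1, by omega⟩ j := by
  unfold sURrow sUR
  apply Finset.sum_congr _ (fun _ _ => rfl)
  ext a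
  simp only [Finset.mem_filter, Finset.mem_univ, true_and, Fin.lt_def, Fin.le_def]
  omega

lemma sURcol_zero (x : Fin n → Fin n' → ℕ) (i : Fin n) (j : Fin n') (hj : j.val + 1 = n') :
    sURcol x i j = 0 := by
  unfold sURcol
  apply Finset.sum_eq_zero
  intro a _
  rw [Finset.filter_false_of_mem, Finset.sum_empty]
  intro b _
  simp only [Fin.lt_def]
  omega

lemma sURcol_eq (x : Fin n → Fin n' → ℕ) (i : Fin n) (j : Fin n') (hj : j.val + 1 < n') :
    sURcol x i j = sUR x i ⟨j.val + 1, hj⟩ := by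
  unfold sURcol sUR
  apply Finset.sum_congr rfl
  intro a _
  apply Finset.sum_congr _ (fun _ _ => rfl)
  ext b
  simp only [Finset.mem_filter, Finset.mem_univ, true_and, Fin.lt_def, Fin.le_def]
  omega

lemma D_zero (x : Fin n → Fin n' → ℕ) (i : Fin n) (hi : i.val = 0) (j : Fin n') :
    D x i j = 0 := by
  unfold D
  rw [Finset.filter_false_of_mem, Finset.sum_empty]
  intro a _
  simp only [Fin.lt_def, hi]
  omega

lemma D_eq (x : Fin n → Fin n' → ℕ) (i : Fin n) (hi : i.val ≠ 0) (j : Fin n') :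
    D x i j = sURcol x ⟨i.val - 1, by omega⟩ j := by
  unfold D sURcol
  apply Finset.sum_congr _ (fun _ _ => rfl)
  ext a
  simp only [Finset.mem_filter, Finset.mem_univ, true_and, Fin.lt_def, Fin.le_def]
  omega

lemma sURrow_mono {m m1 : Fin n → Fin n' → ℕ} (h : MatLE m m1) (i : Fin n) (j : Fin n') :
    sURrow m i j ≤ sURrow m1 i j := by
  by_cases hi : i.val = 0
  · rw [sURrow_zero m i hi, sURrow_zero m1 i hi]
  · rw [sURrow_eq m i hi, sURrow_eq m1 i hi]
    exact h _ _

lemma sURcol_mono {m m1 : Fin n → Fin n' → ℕ} (h : MatLE m m1) (i : Fin n) (j : Fin n') :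
    sURcol m i j ≤ sURcol m1 i j := by
  by_cases hj : j.val + 1 = n'
  · rw [sURcol_zero m i j hj, sURcol_zero m1 i j hj]
  · have hj' : j.val + 1 < n' := lt_of_le_of_ne j.isLt hj
    rw [sURcol_eq m i j hj', sURcol_eq m1 i j hj']
    exact h _ _

lemma D_mono {m m1 : Fin n → Fin n' → ℕ} (h : MatLE m m1) (i : Fin n) (j : Fin n') :
    D m i j ≤ D m1 i j := by
  by_cases hi : i.val = 0
  · rw [D_zero m i hi, D_zero m1 i hi]
  · rw [D_eq m i hi, D_eq m1 i hi]
    exact sURcol_mono h _ _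

lemma entry_ge {m m' m1 : Fin n → Fin n' → ℕ} {i : Fin n} {j : Fin n'}
    (hc : Cancellable m m' i j) (h1 : MatLE m m1) (h2 : MatLE m1 m') :
    1 ≤ m1 i j := by
  obtain ⟨h0, hr, hcc⟩ := hc
  have I1 := identity m i j
  have I2 := identity m1 i j
  have a1 := h1 i j
  have a2 := D_mono h1 i j
  have a3 := sURrow_mono h2 i j
  have a4 := sURcol_mono h2 i j
  omega

lemma ind_sum {α β : Type*} [DecidableEq α] [DecidableEq β] (s : Finset α) (t : Finset β)
    (a : α) (bb : β) :
    ∑ x ∈ s, ∑ y ∈ t, (if x = a ∧ y = bb then (1:ℕ) else 0)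
      = if a ∈ s ∧ bb ∈ t then 1 else 0 := by
  have h1 : ∀ x, ∑ y ∈ t, (if x = a ∧ y = bb then (1:ℕ) else 0)
      = if x = a then (if bb ∈ t then 1 else 0) else 0 := by
    intro x
    by_cases hx : x = a <;> simp [hx, Finset.sum_ite_eq']
  rw [Finset.sum_congr rfl (fun x _ => h1 x)]
  simp only [Finset.sum_ite_eq']
  by_cases ha : a ∈ s <;> by_cases hb : bb ∈ t <;> simp [ha, hb]

lemma sUR_addE (p : Fin n → Fin n' → ℕ) (i : Fin n) (j : Fin n') (i' : Fin n) (j' : Fin n') :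
    sUR (fun a bb => p a bb + if a = i ∧ bb = j then 1 else 0) i' j'
      = sUR p i' j' + (if i ≤ i' ∧ j' ≤ j then 1 else 0) := by
  unfold sUR
  simp only [Finset.sum_add_distrib]
  rw [ind_sum]
  simp

lemma sUR_subE (x : Fin n → Fin n' → ℕ) (i : Fin n) (j : Fin n') (hx : 1 ≤ x i j)
    (i' : Fin n) (j' : Fin n') :
    sUR x i' j' = sUR (subE x i j) i' j' + (if i ≤ i' ∧ j' ≤ j then 1 else 0) := by
  have hsub : x = fun a bb => subE x i j a bb + if a = i ∧ bb = j then 1 else 0 := by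
    funext a bb
    unfold subE
    by_cases h : a = i ∧ bb = j
    · obtain ⟨rfl, rfl⟩ := h
      simp
      omega
    · simp [h]
  conv_lhs => rw [hsub]
  exact sUR_addE (subE x i j) i j i' j'

lemma row_addE (p : Fin n → Fin n' → ℕ) (i : Fin n) (j : Fin n') (i' : Fin n) :
    ∑ j', (p i' j' + if i' = i ∧ j' = j then 1 else 0)
      = (∑ j', p i' j') + (if i' = i then 1 else 0) := by
  rw [Finset.sum_add_distrib]
  congr 1
  by_cases h : i' = i <;> simp [h]

lemma col_addE (p : Fin n → Fin n' → ℕ) (i : Fin n) (j : Fin n') (j' : Fin n') :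
    ∑ i', (p i' j' + if i' = i ∧ j' = j then 1 else 0)
      = (∑ i', p i' j') + (if j' = j then 1 else 0) := by
  rw [Finset.sum_add_distrib]
  congr 1
  by_cases h : j' = j <;> simp [h]

lemma row_subE (x : Fin n → Fin n' → ℕ) (i : Fin n) (j : Fin n') (hx : 1 ≤ x i j) (i' : Fin n) :
    ∑ j', x i' j' = (∑ j', subE x i j i' j') + (if i' = i then 1 else 0) := by
  have hsub : ∀ a bb, x a bb = subE x i j a bb + if a = i ∧ bb = j then 1 else 0 := by
    intro a bb
    unfold subE
    by_cases h : a = i ∧ bb = j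
    · obtain ⟨rfl, rfl⟩ := h
      simp
      omega
    · simp [h]
  calc ∑ j', x i' j' = ∑ j', (subE x i j i' j' + if i' = i ∧ j' = j then 1 else 0) := by
        exact Finset.sum_congr rfl (fun bb _ => hsub i' bb)
    _ = _ := row_addE (subE x i j) i j i'

lemma col_subE (x : Fin n → Fin n' → ℕ) (i : Fin n) (j : Fin n') (hx : 1 ≤ x i j) (j' : Fin n') :
    ∑ i', x i' j' = (∑ i', subE x i j i' j') + (if j' = j then 1 else 0) := by
  have hsub : ∀ a bb, x a bb = subE x i j a bb + if a = i ∧ bb = j then 1 else 0 := by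
    intro a bb
    unfold subE
    by_cases h : a = i ∧ bb = j
    · obtain ⟨rfl, rfl⟩ := h
      simp
      omega
    · simp [h]
  calc ∑ i', x i' j' = ∑ i', (subE x i j i' j' + if i' = i ∧ j' = j then 1 else 0) := by
        exact Finset.sum_congr rfl (fun a _ => hsub a j')
    _ = _ := col_addE (subE x i j) i j j'

end S19

/-- if `(i,j)` is cancellable for `[m,m']`, then `m¹ ↦ m¹ − e` is an order
isomorphism from the interval `[m,m']` in `M_{(b_i);(c_j)}` onto the interval
`[m−e, m'−e]` in `M_{(b̃_i);(c̃_j)}`, where `b̃_{i'} = b_{i'} − δ_{i,i'}` and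
`c̃_{j'} = c_{j'} − δ_{j,j'}`. -/


theorem stmt19 (n n' : ℕ) (b : Fin n → ℕ) (c : Fin n' → ℕ)
    (m m' : Fin n → Fin n' → ℕ)
    (hm : MemM b c m) (hm' : MemM b c m')
    (hord : MatLE m m') (i : Fin n) (j : Fin n')
    (hcanc : Cancellable m m' i j) :
    -- the map sends the interval [m,m'] into the interval [m−e,m'−e] in M_{(b̃);(c̃)}
    (∀ m1, MemM b c m1 → MatLE m m1 → MatLE m1 m' →
      MemM (fun i' => b i' - (if i' = i then 1 else 0))
           (fun j' => c j' - (if j' = j then 1 else 0)) (subE m1 i j) ∧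
      MatLE (subE m i j) (subE m1 i j) ∧ MatLE (subE m1 i j) (subE m' i j)) ∧
    -- it is order-preserving and order-reflecting (hence injective)
    (∀ m1 m2, MemM b c m1 → MatLE m m1 → MatLE m1 m' →
      MemM b c m2 → MatLE m m2 → MatLE m2 m' →
      (MatLE m1 m2 ↔ MatLE (subE m1 i j) (subE m2 i j))) ∧
    (∀ m1 m2, MemM b c m1 → MatLE m m1 → MatLE m1 m' →
      MemM b c m2 → MatLE m m2 → MatLE m2 m' →
      subE m1 i j = subE m2 i j → m1 = m2) ∧
    -- it is surjective onto the interval [m−e, m'−e]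
    (∀ p : Fin n → Fin n' → ℕ,
      MemM (fun i' => b i' - (if i' = i then 1 else 0))
           (fun j' => c j' - (if j' = j then 1 else 0)) p →
      MatLE (subE m i j) p → MatLE p (subE m' i j) →
      ∃ m1, MemM b c m1 ∧ MatLE m m1 ∧ MatLE m1 m' ∧ subE m1 i j = p) := by
  have hm0 : 1 ≤ m i j := hcanc.1
  have hm'1 : 1 ≤ m' i j := S19.entry_ge hcanc hord (fun _ _ => le_rfl)
  refine ⟨?_, ?_, ?_, ?_⟩
  · -- Part 1
    intro m1 hmem1 hle1 hle2
    have h1 : 1 ≤ m1 i j := S19.entry_ge hcanc hle1 hle2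
    refine ⟨⟨?_, ?_⟩, ?_, ?_⟩
    · intro i'
      have hrs := S19.row_subE m1 i j h1 i'
      have hb := hmem1.1 i'
      by_cases hcase : i' = i
      · simp only [hcase, if_true, eq_self_iff_true, ite_true] at hrs hb ⊢
        omega
      · simp only [if_neg hcase] at hrs ⊢
        omega
    · intro j'
      have hcs := S19.col_subE m1 i j h1 j'
      have hc := hmem1.2 j'
      by_cases hcase : j' = j
      · simp only [hcase, if_true, eq_self_iff_true, ite_true] at hcs hc ⊢
        omega
      · simp only [if_neg hcase] at hcs ⊢
        omega
    · intro i' j'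
      have e1 := S19.sUR_subE m i j hm0 i' j'
      have e2 := S19.sUR_subE m1 i j h1 i' j'
      have hv := hle1 i' j'
      generalize (if i ≤ i' ∧ j' ≤ j then (1:ℕ) else 0) = t at e1 e2
      omega
    · intro i' j'
      have e1 := S19.sUR_subE m1 i j h1 i' j'
      have e2 := S19.sUR_subE m' i j hm'1 i' j'
      have hv := hle2 i' j'
      generalize (if i ≤ i' ∧ j' ≤ j then (1:ℕ) else 0) = t at e1 e2
      omega
  · -- Part 2
    intro m1 m2 hmem1 hle1 hle2 hmem2 hle3 hle4
    have h1 : 1 ≤ m1 i j := S19.entry_ge hcanc hle1 hle2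
    have h2 : 1 ≤ m2 i j := S19.entry_ge hcanc hle3 hle4
    constructor
    · intro h i' j'
      have e1 := S19.sUR_subE m1 i j h1 i' j'
      have e2 := S19.sUR_subE m2 i j h2 i' j'
      have hv := h i' j'
      generalize (if i ≤ i' ∧ j' ≤ j then (1:ℕ) else 0) = t at e1 e2
      omega
    · intro h i' j'
      have e1 := S19.sUR_subE m1 i j h1 i' j'
      have e2 := S19.sUR_subE m2 i j h2 i' j'
      have hv := h i' j'
      generalize (if i ≤ i' ∧ j' ≤ j then (1:ℕ) else 0) = t at e1 e2
      omega
  · -- Part 3: injectivity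
    intro m1 m2 hmem1 hle1 hle2 hmem2 hle3 hle4 heq
    have h1 : 1 ≤ m1 i j := S19.entry_ge hcanc hle1 hle2
    have h2 : 1 ≤ m2 i j := S19.entry_ge hcanc hle3 hle4
    funext a bb
    have hv := congrFun (congrFun heq a) bb
    simp only [subE] at hv
    by_cases h : a = i ∧ bb = j
    · rw [if_pos h, if_pos h] at hv
      obtain ⟨rfl, rfl⟩ := h
      omega
    · simpa only [if_neg h] using hv
  · -- Part 4: surjectivity
    intro p hpmem hp1 hp2
    have hbi : 1 ≤ b i := by
      have hb := hm.1 i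
      have h2 : m i j ≤ ∑ j', m i j' :=
        Finset.single_le_sum (f := fun j' => m i j') (fun _ _ => Nat.zero_le _)
          (Finset.mem_univ j)
      omega
    have hcj : 1 ≤ c j := by
      have hc := hm.2 j
      have h2 : m i j ≤ ∑ i', m i' j :=
        Finset.single_le_sum (f := fun i' => m i' j) (fun _ _ => Nat.zero_le _)
          (Finset.mem_univ i)
      omega
    refine ⟨fun a bb => p a bb + if a = i ∧ bb = j then 1 else 0, ⟨?_, ?_⟩, ?_, ?_, ?_⟩
    · intro i'
      show (∑ j', (p i' j' + if i' = i ∧ j' = j then 1 else 0)) = b i'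
      rw [S19.row_addE p i j i']
      have hb := hpmem.1 i'
      by_cases hcase : i' = i
      · simp only [hcase, if_true, eq_self_iff_true, ite_true] at hb ⊢
        omega
      · simp only [if_neg hcase] at hb ⊢
        omega
    · intro j'
      show (∑ i', (p i' j' + if i' = i ∧ j' = j then 1 else 0)) = c j'
      rw [S19.col_addE p i j j']
      have hc := hpmem.2 j'
      by_cases hcase : j' = j
      · simp only [hcase, if_true, eq_self_iff_true, ite_true] at hc ⊢
        omega
      · simp only [if_neg hcase] at hc ⊢
        omega
    · intro i' j'
      have e1 := S19.sUR_subE m i j hm0 i' j'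
      have ha := S19.sUR_addE p i j i' j'
      have hv := hp1 i' j'
      rw [ha]
      generalize (if i ≤ i' ∧ j' ≤ j then (1:ℕ) else 0) = t at e1 ⊢
      omega
    · intro i' j'
      have e2 := S19.sUR_subE m' i j hm'1 i' j'
      have ha := S19.sUR_addE p i j i' j'
      have hv := hp2 i' j'
      rw [ha]
      generalize (if i ≤ i' ∧ j' ≤ j then (1:ℕ) else 0) = t at e2 ⊢
      omega
    · funext a bb
      simp only [subE]
      by_cases h : a = i ∧ bb = j
      · obtain ⟨rfl, rfl⟩ := h
        simp
      · simp [h]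
end
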